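/- arXiv:1407.1966 — 4 statements merged into one kernel-verified Lean document; each statement's English description precedes it below -/
import Mathlib

section
/- Let p be an odd prime, r ≥ 3 an integer, and A = {1,…,p−1}. Then s_{A,≤3}(C_p^r) − 1 equals the maximal cardinality of a cap set in the projective space PG(r−1, 𝔽_p). Moreover, for elements g_1,…,g_n ∈ C_p^r \ {0} with n ≥ 4 that generate C_p^r, the sequence g_1⋯g_n has no A-weighted zero-subsum of length at most 3 if and only if the points of PG(r−1, 𝔽_p) represented by g_1,…,g_n form a cap set of size n (in particular the n points are distinct). -/
open scoped BigOperators

/-- `l` encodes a `W`-weighted zero-subsum of the sequence (multiset) `S`: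
a nonempty list of (weight, group element) pairs with weights in `W`, whose
group elements form a sub-multiset of `S` and whose weighted sum is zero. -/
def IsWZeroSubsum {G : Type*} [AddCommGroup G] (W : Set ℤ) (S : Multiset G)
    (l : List (ℤ × G)) : Prop :=
  l ≠ [] ∧ (∀ p ∈ l, p.1 ∈ W) ∧ (↑(l.map Prod.snd) : Multiset G) ≤ S ∧
    (l.map fun p => p.1 • p.2).sum = 0

/-- `S` has a `W`-weighted zero-subsum whose length lies in `L`. -/
def HasWZeroSubsumLen {G : Type*} [AddCommGroup G] (W : Set ℤ) (S : Multiset G)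
    (L : Set ℕ) : Prop :=
  ∃ l : List (ℤ × G), IsWZeroSubsum W S l ∧ l.length ∈ L

/-- `S` has `m` pairwise disjoint `W`-weighted zero-subsums. -/
def HasDisjointWZeroSubsums {G : Type*} [AddCommGroup G] (W : Set ℤ) (S : Multiset G)
    (m : ℕ) : Prop :=
  ∃ ls : List (List (ℤ × G)), ls.length = m ∧
    (∀ l ∈ ls, l ≠ [] ∧ (∀ p ∈ l, p.1 ∈ W) ∧ (l.map fun p => p.1 • p.2).sum = 0) ∧
    (↑(ls.flatten.map Prod.snd) : Multiset G) ≤ S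

/-- The `m`-wise `W`-weighted Davenport constant `D_{W,m}(G)`. -/
noncomputable def DW (W : Set ℤ) (G : Type*) [AddCommGroup G] (m : ℕ) : ℕ :=
  sInf {n : ℕ | ∀ S : Multiset G, n ≤ Multiset.card S → HasDisjointWZeroSubsums W S m}

/-- The `L`-constrained `W`-weighted Davenport constant `s_{W,L}(G)`, valued in `ℕ∞`. -/
noncomputable def sWL (W : Set ℤ) (G : Type*) [AddCommGroup G] (L : Set ℕ) : ℕ∞ :=
  sInf {N : ℕ∞ | ∃ n : ℕ, N = (n : ℕ∞) ∧
    ∀ S : Multiset G, n ≤ Multiset.card S → HasWZeroSubsumLen W S L}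

/-- The `d`-constrained `W`-weighted Davenport constant `s_{W,≤d}(G)`. -/
noncomputable def sWle (W : Set ℤ) (G : Type*) [AddCommGroup G] (d : ℕ) : ℕ∞ :=
  sWL W G {t | 1 ≤ t ∧ t ≤ d}

/-- `e_W(G)`: the smallest `t ≥ 1` such that some `t` weights from `W` sum to a
multiple of `exp(G)`. -/
noncomputable def eW (W : Set ℤ) (G : Type*) [AddCommGroup G] : ℕ :=
  sInf {t : ℕ | 1 ≤ t ∧ ∃ w : Fin t → ℤ, (∀ i, w i ∈ W) ∧
    ((AddMonoid.exponent G : ℤ) ∣ ∑ i, w i)}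

/-- `W` is multiplicatively closed modulo `n`. -/
def MulClosedMod (W : Set ℤ) (n : ℕ) : Prop :=
  ∀ w ∈ W, ∀ w' ∈ W, ∃ u ∈ W, (n : ℤ) ∣ w * w' - u

/-- A cap set in the projective space `ℙ K V`: no three (distinct) points of `P`
are collinear, i.e. any three distinct points have linearly independent
representatives. -/
def IsCapSet (K : Type*) [DivisionRing K] (V : Type*) [AddCommGroup V] [Module K V]
    (P : Set (Projectivization K V)) : Prop :=
  ∀ x ∈ P, ∀ y ∈ P, ∀ z ∈ P, x ≠ y → x ≠ z → y ≠ z →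
    LinearIndependent K ![Projectivization.rep x, Projectivization.rep y,
      Projectivization.rep z]

namespace Stmt14Aux

open Projectivization

set_option linter.unusedSectionVars false

section MS
variable {α : Type*} [DecidableEq α] {n : ℕ}


variable {α : Type*} [DecidableEq α] {n : ℕ}
set_option linter.unusedSectionVars false

lemma ofFn_coe (g : Fin n → α) :
    (↑(List.ofFn g) : Multiset α) = Multiset.map g Finset.univ.val :=
  (Fin.univ_val_map g).symm

lemma nodup_le_univ (s : Multiset (Fin n)) (hs : s.Nodup) : s ≤ Finset.univ.val := by
  rw [Multiset.le_iff_count]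
  intro a
  have h1 : Multiset.count a s ≤ 1 := Multiset.nodup_iff_count_le_one.1 hs a
  have h2 : Multiset.count a Finset.univ.val = 1 :=
    Multiset.count_eq_one_of_mem Finset.univ.nodup (Finset.mem_univ a)
  omega

lemma sub2 (g : Fin n → α) {i j : Fin n} (hij : i ≠ j) :
    (↑[g i, g j] : Multiset α) ≤ ↑(List.ofFn g) := by
  rw [ofFn_coe]
  have : (↑[g i, g j] : Multiset α) = Multiset.map g ↑[i, j] := by simp
  rw [this]
  exact Multiset.map_le_map (nodup_le_univ _ (by simp [hij]))

lemma sub3 (g : Fin n → α) {i j k : Fin n} (hij : i ≠ j) (hik : i ≠ k) (hjk : j ≠ k) :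
    (↑[g i, g j, g k] : Multiset α) ≤ ↑(List.ofFn g) := by
  rw [ofFn_coe]
  have : (↑[g i, g j, g k] : Multiset α) = Multiset.map g ↑[i, j, k] := by simp
  rw [this]
  exact Multiset.map_le_map (nodup_le_univ _ (by simp [hij, hik, hjk]))

-- extraction
lemma ex_step {s : Multiset α} {u : Multiset (Fin n)} {v : α} (g : Fin n → α)
    (h : v ::ₘ s ≤ Multiset.map g u) :
    ∃ i ∈ u, g i = v ∧ s ≤ Multiset.map g (u.erase i) := by
  have hv : v ∈ Multiset.map g u := Multiset.mem_of_le h (Multiset.mem_cons_self v s)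
  rw [Multiset.mem_map] at hv
  obtain ⟨i, hi, hgi⟩ := hv
  refine ⟨i, hi, hgi, ?_⟩
  have h2 : s ≤ (Multiset.map g u).erase v := by
    have := Multiset.erase_le_erase v h
    rwa [Multiset.erase_cons_head] at this
  have h3 : (Multiset.map g u).erase v = Multiset.map g (u.erase i) := by
    conv_lhs => rw [← Multiset.cons_erase hi]
    rw [Multiset.map_cons, hgi, Multiset.erase_cons_head]
  rwa [h3] at h2

lemma ex2 (g : Fin n → α) {v1 v2 : α}
    (h : (↑[v1, v2] : Multiset α) ≤ ↑(List.ofFn g)) :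
    ∃ i j : Fin n, i ≠ j ∧ g i = v1 ∧ g j = v2 := by
  rw [ofFn_coe] at h
  obtain ⟨i, hi, hgi, h1⟩ := ex_step g (show v1 ::ₘ (↑[v2] : Multiset α) ≤ _ from h)
  obtain ⟨j, hj, hgj, -⟩ := ex_step g (show v2 ::ₘ (0 : Multiset α) ≤ _ by simpa using h1)
  exact ⟨i, j,
    Ne.symm ((Multiset.Nodup.mem_erase_iff Finset.univ.nodup).1 hj).1, hgi, hgj⟩

lemma ex3 (g : Fin n → α) {v1 v2 v3 : α}
    (h : (↑[v1, v2, v3] : Multiset α) ≤ ↑(List.ofFn g)) :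
    ∃ i j k : Fin n, i ≠ j ∧ i ≠ k ∧ j ≠ k ∧ g i = v1 ∧ g j = v2 ∧ g k = v3 := by
  rw [ofFn_coe] at h
  obtain ⟨i, hi, hgi, h1⟩ := ex_step g (show v1 ::ₘ (↑[v2, v3] : Multiset α) ≤ _ from h)
  obtain ⟨j, hj, hgj, h2⟩ := ex_step g (show v2 ::ₘ (↑[v3] : Multiset α) ≤ _ from h1)
  obtain ⟨k, hk, hgk, -⟩ := ex_step g (show v3 ::ₘ (0 : Multiset α) ≤ _ by simpa using h2)
  have huniv : (Finset.univ.val : Multiset (Fin n)).Nodup := Finset.univ.nodup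
  have hij : i ≠ j := Ne.symm ((Multiset.Nodup.mem_erase_iff huniv).1 hj).1
  have hjk' : k ∈ Finset.univ.val.erase i := Multiset.mem_of_mem_erase hk
  have hik : i ≠ k := Ne.symm ((Multiset.Nodup.mem_erase_iff huniv).1 hjk').1
  have hjk : j ≠ k :=
    Ne.symm ((Multiset.Nodup.mem_erase_iff (Multiset.Nodup.erase i huniv)).1 hk).1
  exact ⟨i, j, k, hij, hik, hjk, hgi, hgj, hgk⟩


lemma pair_le {S : Multiset α} {a b : α} (ha : a ∈ S) (hb : b ∈ S) (hab : a ≠ b) :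
    (↑[a, b] : Multiset α) ≤ S := by
  refine (Multiset.le_iff_subset (by simp [hab])).2 ?_
  intro x hx
  simp only [Multiset.mem_coe, List.mem_cons, List.mem_singleton, List.not_mem_nil,
    or_false] at hx
  rcases hx with rfl | rfl
  exacts [ha, hb]

lemma triple_le {S : Multiset α} {a b c : α} (ha : a ∈ S) (hb : b ∈ S) (hc : c ∈ S)
    (hab : a ≠ b) (hac : a ≠ c) (hbc : b ≠ c) :
    (↑[a, b, c] : Multiset α) ≤ S := by
  refine (Multiset.le_iff_subset (by simp [hab, hac, hbc])).2 ?_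
  intro x hx
  simp only [Multiset.mem_coe, List.mem_cons, List.mem_singleton, List.not_mem_nil,
    or_false] at hx
  rcases hx with rfl | rfl | rfl
  exacts [ha, hb, hc]

lemma double_le {S : Multiset α} {v : α} (h : 2 ≤ Multiset.count v S) :
    (↑[v, v] : Multiset α) ≤ S := by
  rw [show (↑[v, v] : Multiset α) = v ::ₘ {v} from rfl, Multiset.le_iff_count]
  intro x
  rw [Multiset.count_cons, Multiset.count_singleton]
  by_cases hx : x = v
  · subst hx
    simpa using h
  · simp [hx]

end MS

variable {p : ℕ} [hp : Fact p.Prime]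
variable {V : Type*} [AddCommGroup V] [Module (ZMod p) V]


open Projectivization

variable {p : ℕ} [hp : Fact p.Prime]
variable {V : Type*} [AddCommGroup V] [Module (ZMod p) V]

lemma wcast_ne {w : ℤ} (hw : w ∈ Set.Icc 1 ((p : ℤ) - 1)) : (w : ZMod p) ≠ 0 := by
  have hp2 : 2 ≤ p := hp.out.two_le
  intro h
  rw [ZMod.intCast_zmod_eq_zero_iff_dvd] at h
  obtain ⟨hw1, hw2⟩ := hw
  have := Int.le_of_dvd (by omega) h
  omega

lemma weight_of (c : ZMod p) (hc : c ≠ 0) :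
    ∃ w : ℤ, w ∈ Set.Icc 1 ((p : ℤ) - 1) ∧ ((w : ZMod p)) = c := by
  haveI : NeZero p := ⟨hp.out.ne_zero⟩
  refine ⟨(c.val : ℤ), ⟨?_, ?_⟩, ?_⟩
  · have := (ZMod.val_eq_zero c).not.2 hc
    omega
  · have := ZMod.val_lt c
    omega
  · push_cast
    rw [ZMod.natCast_val, ZMod.cast_id]

lemma two_rel {u w : V} (hu : u ≠ 0) (hw : w ≠ 0) {a b : ZMod p}
    (h : a • u + b • w = 0) :
    (a = 0 ∧ b = 0) ∨ Projectivization.mk (ZMod p) u hu = Projectivization.mk (ZMod p) w hw := by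
  by_cases ha : a = 0
  · subst ha
    rw [zero_smul, zero_add] at h
    rcases smul_eq_zero.1 h with hb | hw' 
    · exact Or.inl ⟨rfl, hb⟩
    · exact absurd hw' hw
  · right
    rw [Projectivization.mk_eq_mk_iff']
    refine ⟨-(a⁻¹ * b), ?_⟩
    have : u = a⁻¹ • (a • u) := by rw [inv_smul_smul₀ ha]
    rw [eq_comm, this]
    have h' : a • u = -(b • w) := by linear_combination (norm := module) h
    rw [h']
    simp [smul_neg, smul_smul, neg_smul]


open Projectivization

variable {p : ℕ} [hp : Fact p.Prime]
variable {V : Type*} [AddCommGroup V] [Module (ZMod p) V]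

-- from `mk v = x`, get a unit scalar relating v and x.rep
lemma rep_rel {v : V} (hv : v ≠ 0) {x : Projectivization (ZMod p) V}
    (h : Projectivization.mk (ZMod p) v hv = x) :
    ∃ c : ZMod p, c ≠ 0 ∧ v = c • x.rep := by
  have : Projectivization.mk (ZMod p) v hv = Projectivization.mk (ZMod p) x.rep x.rep_nonzero := by
    rw [h, Projectivization.mk_rep]
  rw [Projectivization.mk_eq_mk_iff'] at this
  obtain ⟨c, hc⟩ := this
  refine ⟨c, ?_, hc.symm⟩
  intro h0
  rw [h0, zero_smul] at hc
  exact hv hc.symm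

lemma cap_no_rel {x y z : Projectivization (ZMod p) V}
    (hli : LinearIndependent (ZMod p) ![x.rep, y.rep, z.rep])
    {v1 v2 v3 : V} (h1 : v1 ≠ 0) (h2 : v2 ≠ 0) (h3 : v3 ≠ 0)
    (e1 : Projectivization.mk (ZMod p) v1 h1 = x)
    (e2 : Projectivization.mk (ZMod p) v2 h2 = y)
    (e3 : Projectivization.mk (ZMod p) v3 h3 = z)
    {c1 c2 c3 : ZMod p} (n1 : c1 ≠ 0)
    (hrel : c1 • v1 + c2 • v2 + c3 • v3 = 0) : False := by
  obtain ⟨d1, hd1, hv1⟩ := rep_rel h1 e1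
  obtain ⟨d2, hd2, hv2⟩ := rep_rel h2 e2
  obtain ⟨d3, hd3, hv3⟩ := rep_rel h3 e3
  have hsum : (c1 * d1) • x.rep + (c2 * d2) • y.rep + (c3 * d3) • z.rep = 0 := by
    rw [← smul_smul, ← smul_smul, ← smul_smul, ← hv1, ← hv2, ← hv3]
    exact hrel
  have := Fintype.linearIndependent_iff.1 hli ![c1 * d1, c2 * d2, c3 * d3] ?_ 0
  · simp only [Matrix.cons_val_zero] at this
    exact n1 ((mul_eq_zero.1 this).resolve_right hd1)
  · rw [Fin.sum_univ_three]
    simpa using hsum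

lemma dep_clean {x y z : Projectivization (ZMod p) V}
    (hxy : x ≠ y) (hxz : x ≠ z) (hyz : y ≠ z)
    (h : ¬ LinearIndependent (ZMod p) ![x.rep, y.rep, z.rep]) :
    ∃ c1 c2 c3 : ZMod p, c1 ≠ 0 ∧ c2 ≠ 0 ∧ c3 ≠ 0 ∧
      c1 • x.rep + c2 • y.rep + c3 • z.rep = 0 := by
  rw [Fintype.not_linearIndependent_iff] at h
  obtain ⟨c, hsum, i, hi⟩ := h
  rw [Fin.sum_univ_three] at hsum
  simp only [Matrix.cons_val_zero, Matrix.cons_val_one, Matrix.head_cons,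
    Matrix.cons_val_two, Matrix.tail_cons] at hsum
  have hne : ¬ (c 0 = 0 ∧ c 1 = 0 ∧ c 2 = 0) := by
    rintro ⟨h0, h1, h2⟩
    fin_cases i <;> simp_all
  have key : ∀ (a b : Projectivization (ZMod p) V) (u v : ZMod p), a ≠ b →
      u • a.rep + v • b.rep = 0 → u = 0 ∧ v = 0 := by
    intro a b u v hab hrel
    rcases two_rel a.rep_nonzero b.rep_nonzero hrel with h' | h'
    · exact h'
    · rw [Projectivization.mk_rep, Projectivization.mk_rep] at h'
      exact absurd h' hab
  refine ⟨c 0, c 1, c 2, ?_, ?_, ?_, hsum⟩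
  · intro h0
    rw [h0, zero_smul, zero_add] at hsum
    obtain ⟨e1, e2⟩ := key y z _ _ hyz hsum
    exact hne ⟨h0, e1, e2⟩
  · intro h1
    rw [h1, zero_smul, add_zero] at hsum
    obtain ⟨e1, e2⟩ := key x z _ _ hxz hsum
    exact hne ⟨e1, h1, e2⟩
  · intro h2
    rw [h2, zero_smul, add_zero] at hsum
    obtain ⟨e1, e2⟩ := key x y _ _ hxy hsum
    exact hne ⟨e1, e2, h2⟩





variable {p : ℕ} [hp : Fact p.Prime]
variable {V : Type*} [AddCommGroup V] [Module (ZMod p) V]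

lemma construct1 {S : Multiset V} (h0 : (0 : V) ∈ S) :
    HasWZeroSubsumLen (Set.Icc 1 ((p:ℤ)-1)) S {t | 1 ≤ t ∧ t ≤ 3} := by
  have hp2 : 2 ≤ p := hp.out.two_le
  refine ⟨[((1 : ℤ), (0 : V))], ⟨by simp, ?_, ?_, by simp⟩, by simp⟩
  · intro q hq
    simp only [List.mem_singleton] at hq
    subst hq
    refine ⟨by norm_num, by push_cast; omega⟩
  · simpa using Multiset.singleton_le.2 h0

lemma construct2 {S : Multiset V} {v1 v2 : V}
    (hsub : (↑[v1, v2] : Multiset V) ≤ S) {c1 c2 : ZMod p}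
    (h1 : c1 ≠ 0) (h2 : c2 ≠ 0) (hsum : c1 • v1 + c2 • v2 = 0) :
    HasWZeroSubsumLen (Set.Icc 1 ((p:ℤ)-1)) S {t | 1 ≤ t ∧ t ≤ 3} := by
  obtain ⟨w1, hw1, e1⟩ := weight_of c1 h1
  obtain ⟨w2, hw2, e2⟩ := weight_of c2 h2
  refine ⟨[(w1, v1), (w2, v2)], ⟨by simp, ?_, ?_, ?_⟩, by simp⟩
  · intro q hq
    simp only [List.mem_cons, List.mem_singleton, List.not_mem_nil, or_false] at hq
    rcases hq with h | h <;> subst h <;> assumption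
  · simpa using hsub
  · simp only [List.map_cons, List.map_nil, List.sum_cons, List.sum_nil, add_zero]
    rw [← Int.cast_smul_eq_zsmul (ZMod p) w1 v1, ← Int.cast_smul_eq_zsmul (ZMod p) w2 v2,
      e1, e2, hsum]

lemma construct3 {S : Multiset V} {v1 v2 v3 : V}
    (hsub : (↑[v1, v2, v3] : Multiset V) ≤ S) {c1 c2 c3 : ZMod p}
    (h1 : c1 ≠ 0) (h2 : c2 ≠ 0) (h3 : c3 ≠ 0)
    (hsum : c1 • v1 + c2 • v2 + c3 • v3 = 0) :
    HasWZeroSubsumLen (Set.Icc 1 ((p:ℤ)-1)) S {t | 1 ≤ t ∧ t ≤ 3} := by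
  obtain ⟨w1, hw1, e1⟩ := weight_of c1 h1
  obtain ⟨w2, hw2, e2⟩ := weight_of c2 h2
  obtain ⟨w3, hw3, e3⟩ := weight_of c3 h3
  refine ⟨[(w1, v1), (w2, v2), (w3, v3)], ⟨by simp, ?_, ?_, ?_⟩, by simp⟩
  · intro q hq
    simp only [List.mem_cons, List.mem_singleton, List.not_mem_nil, or_false] at hq
    rcases hq with h | h | h <;> subst h <;> assumption
  · simpa using hsub
  · simp only [List.map_cons, List.map_nil, List.sum_cons, List.sum_nil, add_zero]
    rw [← Int.cast_smul_eq_zsmul (ZMod p) w1 v1, ← Int.cast_smul_eq_zsmul (ZMod p) w2 v2,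
      ← Int.cast_smul_eq_zsmul (ZMod p) w3 v3, e1, e2, e3, ← add_assoc, hsum]


lemma smul_ne {c : ZMod p} (hc : c ≠ 0) {v : V} (hv : v ≠ 0) : c • v ≠ 0 := fun h =>
  hv (by rw [← inv_smul_smul₀ hc v, h, smul_zero])

lemma nosub {n : ℕ} (g : Fin n → V) (hg : ∀ i, g i ≠ 0)
    (hinj : Function.Injective (fun i => Projectivization.mk (ZMod p) (g i) (hg i)))
    (hcap : IsCapSet (ZMod p) V
      (Set.range fun i => Projectivization.mk (ZMod p) (g i) (hg i))) :
    ¬ HasWZeroSubsumLen (Set.Icc 1 ((p : ℤ) - 1)) (↑(List.ofFn g) : Multiset V) {t | 1 ≤ t ∧ t ≤ 3} := by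
  classical
  rintro ⟨l, ⟨hne, hW, hsub, hsum⟩, -, h3⟩
  rcases l with - | ⟨a, l⟩
  · exact hne rfl
  rcases l with - | ⟨b, l⟩
  · -- length 1
    have hmem' : a.2 ∈ (↑(List.ofFn g) : Multiset V) :=
      Multiset.mem_of_le hsub (by simp : a.2 ∈ (↑(List.map Prod.snd [a]) : Multiset V))
    have hmem : a.2 ∈ List.ofFn g := Multiset.mem_coe.1 hmem'
    rw [List.mem_ofFn] at hmem
    obtain ⟨i, hi⟩ := hmem
    simp only [List.map_cons, List.map_nil, List.sum_cons, List.sum_nil, add_zero] at hsum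
    rw [← Int.cast_smul_eq_zsmul (ZMod p) a.1 a.2] at hsum
    exact smul_ne (wcast_ne (hW a (by simp))) (hi ▸ hg i) hsum
  rcases l with - | ⟨c, l⟩
  · -- length 2
    have hsub2 : (↑[a.2, b.2] : Multiset V) ≤ ↑(List.ofFn g) := by simpa using hsub
    obtain ⟨i, j, hij, hgi, hgj⟩ := ex2 g hsub2
    simp only [List.map_cons, List.map_nil, List.sum_cons, List.sum_nil, add_zero] at hsum
    rw [← Int.cast_smul_eq_zsmul (ZMod p) a.1 a.2,
      ← Int.cast_smul_eq_zsmul (ZMod p) b.1 b.2, ← hgi, ← hgj] at hsum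
    rcases two_rel (hg i) (hg j) hsum with ⟨h1, -⟩ | heq
    · exact wcast_ne (hW a (by simp)) h1
    · exact hij (hinj heq)
  rcases l with - | ⟨d, l⟩
  · -- length 3
    have hsub3 : (↑[a.2, b.2, c.2] : Multiset V) ≤ ↑(List.ofFn g) := by simpa using hsub
    obtain ⟨i, j, k, hij, hik, hjk, hgi, hgj, hgk⟩ := ex3 g hsub3
    simp only [List.map_cons, List.map_nil, List.sum_cons, List.sum_nil, add_zero] at hsum
    rw [← Int.cast_smul_eq_zsmul (ZMod p) a.1 a.2, ← Int.cast_smul_eq_zsmul (ZMod p) b.1 b.2,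
      ← Int.cast_smul_eq_zsmul (ZMod p) c.1 c.2, ← hgi, ← hgj, ← hgk, ← add_assoc] at hsum
    have hxy : Projectivization.mk (ZMod p) (g i) (hg i) ≠
        Projectivization.mk (ZMod p) (g j) (hg j) := fun e => hij (hinj e)
    have hxz : Projectivization.mk (ZMod p) (g i) (hg i) ≠
        Projectivization.mk (ZMod p) (g k) (hg k) := fun e => hik (hinj e)
    have hyz : Projectivization.mk (ZMod p) (g j) (hg j) ≠
        Projectivization.mk (ZMod p) (g k) (hg k) := fun e => hjk (hinj e)
    have hli := hcap _ ⟨i, rfl⟩ _ ⟨j, rfl⟩ _ ⟨k, rfl⟩ hxy hxz hyz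
    exact cap_no_rel hli (hg i) (hg j) (hg k) rfl rfl rfl
      (wcast_ne (hW a (by simp))) hsum
  · simp only [List.length_cons] at h3
    omega

lemma forward {n : ℕ} (g : Fin n → V) (hg : ∀ i, g i ≠ 0)
    (hno : ¬ HasWZeroSubsumLen (Set.Icc 1 ((p : ℤ) - 1)) (↑(List.ofFn g) : Multiset V)
      {t | 1 ≤ t ∧ t ≤ 3}) :
    Function.Injective (fun i => Projectivization.mk (ZMod p) (g i) (hg i)) ∧
      IsCapSet (ZMod p) V (Set.range fun i => Projectivization.mk (ZMod p) (g i) (hg i)) := by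
  classical
  have hinj : Function.Injective (fun i => Projectivization.mk (ZMod p) (g i) (hg i)) := by
    intro i j hij
    by_contra hne
    simp only [Projectivization.mk_eq_mk_iff'] at hij
    obtain ⟨c, hc⟩ := hij
    have hc0 : c ≠ 0 := fun h => hg i (by rw [← hc, h, zero_smul])
    refine hno (construct2 (sub2 g hne) one_ne_zero (neg_ne_zero.2 hc0) ?_)
    rw [one_smul, neg_smul, ← hc]
    abel
  refine ⟨hinj, ?_⟩
  intro x hx y hy z hz hxy hxz hyz
  by_contra hli
  obtain ⟨i, hi⟩ := hx
  obtain ⟨j, hj⟩ := hy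
  obtain ⟨k, hk⟩ := hz
  obtain ⟨c1, c2, c3, n1, n2, n3, hrel⟩ := dep_clean hxy hxz hyz hli
  obtain ⟨d1, hd1, he1⟩ := rep_rel (hg i) hi
  obtain ⟨d2, hd2, he2⟩ := rep_rel (hg j) hj
  obtain ⟨d3, hd3, he3⟩ := rep_rel (hg k) hk
  have hij : i ≠ j := fun e => hxy (by rw [← hi, ← hj, e])
  have hik : i ≠ k := fun e => hxz (by rw [← hi, ← hk, e])
  have hjk : j ≠ k := fun e => hyz (by rw [← hj, ← hk, e])
  have hrel' : (c1 * d1⁻¹) • g i + (c2 * d2⁻¹) • g j + (c3 * d3⁻¹) • g k = 0 := by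
    rw [he1, he2, he3, smul_smul, smul_smul, smul_smul, mul_assoc, inv_mul_cancel₀ hd1,
      mul_one, mul_assoc, inv_mul_cancel₀ hd2, mul_one, mul_assoc, inv_mul_cancel₀ hd3,
      mul_one]
    exact hrel
  exact hno (construct3 (sub3 g hij hik hjk) (mul_ne_zero n1 (inv_ne_zero hd1))
    (mul_ne_zero n2 (inv_ne_zero hd2)) (mul_ne_zero n3 (inv_ne_zero hd3)) hrel')

lemma part1 (r : ℕ) :
    sWle (Set.Icc 1 ((p : ℤ) - 1)) (Fin r → ZMod p) 3 =
      ((sSup {n : ℕ | ∃ P : Finset (Projectivization (ZMod p) (Fin r → ZMod p)),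
          IsCapSet (ZMod p) (Fin r → ZMod p) (↑P) ∧ P.card = n} + 1 : ℕ) : ℕ∞) := by
  classical
  haveI : Finite (Projectivization (ZMod p) (Fin r → ZMod p)) :=
    inferInstanceAs (Finite (Quotient _))
  haveI := Fintype.ofFinite (Projectivization (ZMod p) (Fin r → ZMod p))
  set capset := {n : ℕ | ∃ P : Finset (Projectivization (ZMod p) (Fin r → ZMod p)),
      IsCapSet (ZMod p) (Fin r → ZMod p) (↑P) ∧ P.card = n} with hcapset
  have hbdd : BddAbove capset :=
    ⟨Fintype.card (Projectivization (ZMod p) (Fin r → ZMod p)), fun n hn => by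
      obtain ⟨P, -, hc⟩ := hn
      exact hc ▸ P.card_le_univ⟩
  have hcne : capset.Nonempty := ⟨0, ∅, by intro x hx; simp at hx, rfl⟩
  obtain ⟨P, hPcap, hPcard⟩ := Nat.sSup_mem hcne hbdd
  set M := sSup capset with hM
  -- upper bound: every multiset of size M+1 has a short zero-subsum
  have hupper : ∀ S : Multiset (Fin r → ZMod p), M + 1 ≤ Multiset.card S →
      HasWZeroSubsumLen (Set.Icc 1 ((p : ℤ) - 1)) S {t | 1 ≤ t ∧ t ≤ 3} := by
    intro S hS
    by_cases h0 : (0 : Fin r → ZMod p) ∈ S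
    · exact construct1 h0
    have hv0 : ∀ v ∈ S, v ≠ (0 : Fin r → ZMod p) := fun v hv e => h0 (e ▸ hv)
    by_cases hnd : S.Nodup
    · by_cases hprop : ∃ v w : Fin r → ZMod p, v ∈ S ∧ w ∈ S ∧ v ≠ w ∧
          ∃ c : ZMod p, c ≠ 0 ∧ w = c • v
      · obtain ⟨v, w, hv, hw, hvw, c, hc, hwc⟩ := hprop
        refine construct2 (pair_le hw hv hvw.symm) one_ne_zero (neg_ne_zero.2 hc) ?_
        rw [one_smul, neg_smul, hwc]
        abel
      · push_neg at hprop
        have hmkinj : ∀ v ∈ S, ∀ w ∈ S, ∀ (hv' : v ≠ 0) (hw' : w ≠ 0),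
            Projectivization.mk (ZMod p) v hv' = Projectivization.mk (ZMod p) w hw' →
            v = w := by
          intro v hv w hw hv' hw' h
          by_contra hne
          rw [Projectivization.mk_eq_mk_iff'] at h
          obtain ⟨c, hc⟩ := h
          have hc0 : c ≠ 0 := fun h' => hv' (by rw [← hc, h', zero_smul])
          exact hprop w v hw hv (Ne.symm hne) c hc0 hc.symm
        set f : {v // v ∈ S.toFinset} → Projectivization (ZMod p) (Fin r → ZMod p) :=
          fun v => Projectivization.mk (ZMod p) v.1
            (hv0 v.1 (Multiset.mem_toFinset.1 v.2)) with hf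
        have hfinj : Function.Injective f := by
          rintro ⟨v, hv⟩ ⟨w, hw⟩ h
          exact Subtype.ext (hmkinj v (Multiset.mem_toFinset.1 hv) w
            (Multiset.mem_toFinset.1 hw) _ _ h)
        set P' : Finset (Projectivization (ZMod p) (Fin r → ZMod p)) :=
          S.toFinset.attach.image f with hP'
        have hcard : P'.card = Multiset.card S := by
          rw [hP', Finset.card_image_of_injective _ hfinj, Finset.card_attach,
            Multiset.toFinset_card_eq_card_iff_nodup.2 hnd]
        have hnotcap : ¬ IsCapSet (ZMod p) (Fin r → ZMod p) (↑P') := by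
          intro hcap
          have hmem : P'.card ∈ capset := ⟨P', hcap, rfl⟩
          have := le_csSup hbdd hmem
          omega
        rw [IsCapSet] at hnotcap
        push_neg at hnotcap
        obtain ⟨x, hx, y, hy, z, hz, hxy, hxz, hyz, hli⟩ := hnotcap
        obtain ⟨⟨v1, hv1m⟩, -, he1⟩ := Finset.mem_image.1 (by exact_mod_cast hx)
        obtain ⟨⟨v2, hv2m⟩, -, he2⟩ := Finset.mem_image.1 (by exact_mod_cast hy)
        obtain ⟨⟨v3, hv3m⟩, -, he3⟩ := Finset.mem_image.1 (by exact_mod_cast hz)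
        have hv1 : v1 ∈ S := Multiset.mem_toFinset.1 hv1m
        have hv2 : v2 ∈ S := Multiset.mem_toFinset.1 hv2m
        have hv3 : v3 ∈ S := Multiset.mem_toFinset.1 hv3m
        obtain ⟨c1, c2, c3, n1, n2, n3, hrel⟩ := dep_clean hxy hxz hyz hli
        obtain ⟨d1, hd1, hq1⟩ := rep_rel _ he1
        obtain ⟨d2, hd2, hq2⟩ := rep_rel _ he2
        obtain ⟨d3, hd3, hq3⟩ := rep_rel _ he3
        have hq1' : v1 = d1 • x.rep := hq1
        have hq2' : v2 = d2 • y.rep := hq2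
        have hq3' : v3 = d3 • z.rep := hq3
        have h12 : v1 ≠ v2 := by
          intro e
          apply hxy
          rw [← he1, ← he2]
          subst e
          rfl
        have h13 : v1 ≠ v3 := by
          intro e
          apply hxz
          rw [← he1, ← he3]
          subst e
          rfl
        have h23 : v2 ≠ v3 := by
          intro e
          apply hyz
          rw [← he2, ← he3]
          subst e
          rfl
        have hrel' : (c1 * d1⁻¹) • v1 + (c2 * d2⁻¹) • v2 + (c3 * d3⁻¹) • v3 = 0 := by
          rw [hq1', hq2', hq3', smul_smul, smul_smul, smul_smul, mul_assoc,
            inv_mul_cancel₀ hd1, mul_one, mul_assoc, inv_mul_cancel₀ hd2, mul_one,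
            mul_assoc, inv_mul_cancel₀ hd3, mul_one]
          exact hrel
        exact construct3 (triple_le hv1 hv2 hv3 h12 h13 h23)
          (mul_ne_zero n1 (inv_ne_zero hd1)) (mul_ne_zero n2 (inv_ne_zero hd2))
          (mul_ne_zero n3 (inv_ne_zero hd3)) hrel'
    · rw [Multiset.nodup_iff_count_le_one] at hnd
      push_neg at hnd
      obtain ⟨v, hv⟩ := hnd
      have hv2 : 2 ≤ Multiset.count v S := hv
      have hv0' : v ≠ 0 := hv0 v (by rw [← Multiset.count_pos]; omega)
      refine construct2 (double_le hv2) one_ne_zero (neg_ne_zero.2 one_ne_zero) ?_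
      rw [one_smul, neg_smul, one_smul]
      abel
    -- (the `hv0'` above is unused; kept for clarity)
  -- lower bound : the reps of a maximum cap set have no short zero-subsum
  have hg0 : ∀ i : Fin P.card, (((P.equivFin.symm i : P) :
      Projectivization (ZMod p) (Fin r → ZMod p)).rep) ≠ 0 :=
    fun i => Projectivization.rep_nonzero _
  set g0 : Fin P.card → (Fin r → ZMod p) :=
    fun i => ((P.equivFin.symm i : P) : Projectivization (ZMod p) (Fin r → ZMod p)).rep
    with hg0def
  have hmk : (fun i => Projectivization.mk (ZMod p) (g0 i) (hg0 i)) =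
      fun i => ((P.equivFin.symm i : P) : Projectivization (ZMod p) (Fin r → ZMod p)) :=
    funext fun i => Projectivization.mk_rep _
  have hinj0 : Function.Injective (fun i => Projectivization.mk (ZMod p) (g0 i) (hg0 i)) := by
    rw [hmk]
    exact Subtype.val_injective.comp P.equivFin.symm.injective
  have hrange : (Set.range fun i => Projectivization.mk (ZMod p) (g0 i) (hg0 i)) = ↑P := by
    rw [hmk]
    ext q
    simp only [Set.mem_range, Finset.coe_mem]
    constructor
    · rintro ⟨i, rfl⟩
      exact (P.equivFin.symm i).2
    · intro hq
      exact ⟨P.equivFin ⟨q, hq⟩, by simp⟩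
  have hnos := nosub g0 hg0 hinj0 (by rw [hrange]; exact hPcap)
  -- conclude
  rw [sWle, sWL]
  apply le_antisymm
  · exact sInf_le ⟨M + 1, rfl, hupper⟩
  · refine le_sInf ?_
    rintro N ⟨m, rfl, hm⟩
    rw [Nat.cast_le]
    by_contra hlt
    push_neg at hlt
    have hcard : m ≤ Multiset.card (↑(List.ofFn g0) : Multiset (Fin r → ZMod p)) := by
      simp only [Multiset.coe_card, List.length_ofFn]
      omega
    exact hnos (hm _ hcard)

end Stmt14Aux


/-- for `p` an odd prime and `r ≥ 3`, `s_{A,≤3}(C_p^r) - 1` equals the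
maximal cardinality of a cap set in `PG(r-1, 𝔽_p)`; and a sequence of `n ≥ 4` nonzero
generating elements has no `A`-weighted zero-subsum of length `≤ 3` iff the represented
projective points are `n` distinct points forming a cap set. -/
theorem stmt14 (p : ℕ) [hp : Fact p.Prime] (hodd : Odd p) (r : ℕ) (hr : 3 ≤ r) :
    (sWle (Set.Icc 1 ((p : ℤ) - 1)) (Fin r → ZMod p) 3 =
      ((sSup {n : ℕ | ∃ P : Finset (Projectivization (ZMod p) (Fin r → ZMod p)),
          IsCapSet (ZMod p) (Fin r → ZMod p) (↑P) ∧ P.card = n} + 1 : ℕ) : ℕ∞)) ∧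
    ∀ (n : ℕ) (g : Fin n → (Fin r → ZMod p)) (hg : ∀ i, g i ≠ 0), 4 ≤ n →
      Submodule.span (ZMod p) (Set.range g) = ⊤ →
      ((¬ HasWZeroSubsumLen (Set.Icc 1 ((p : ℤ) - 1))
          (↑(List.ofFn g) : Multiset (Fin r → ZMod p)) {t | 1 ≤ t ∧ t ≤ 3}) ↔
        (Function.Injective (fun i => Projectivization.mk (ZMod p) (g i) (hg i)) ∧
          IsCapSet (ZMod p) (Fin r → ZMod p)
            (Set.range fun i => Projectivization.mk (ZMod p) (g i) (hg i)))) := by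
  constructor
  · exact Stmt14Aux.part1 r
  · intro n g hg hn hspan
    constructor
    · intro hno
      exact Stmt14Aux.forward g hg hno
    · rintro ⟨hinj, hcap⟩
      exact Stmt14Aux.nosub g hg hinj hcap
end

section
/- Let p be a prime and r ∈ ℕ, and A = {1,…,p−1}. Then s_{A,≤2}(C_p^r) = 1 + (p^r − 1)/(p − 1). -/
open scoped BigOperators

/-!
Over `𝔽_p` the weights `1, …, p - 1` are exactly the nonzero scalars, so a weighted zero-subsum of
length at most two is either a zero term or two terms `v, w` with `v ∈ 𝔽_p w`. A sequence avoiding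
both consists of nonzero vectors representing pairwise distinct points of the projective space
`ℙ(𝔽_p^r)`, which has `(p^r - 1)/(p - 1)` points; one representative of each point is a sequence of
that length with no such subsum.
-/

open scoped LinearAlgebra.Projectivization

theorem sWL_eq_succ {W : Set ℤ} {G : Type*} [AddCommGroup G] {L : Set ℕ} {n : ℕ}
    (h : ∀ S : Multiset G, n + 1 ≤ Multiset.card S → HasWZeroSubsumLen W S L)
    {S₀ : Multiset G} (hS₀ : Multiset.card S₀ = n) (hS₀L : ¬ HasWZeroSubsumLen W S₀ L) :
    sWL W G L = (n + 1 : ℕ) := by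
  refine le_antisymm (sInf_le ⟨n + 1, rfl, h⟩) (le_sInf ?_)
  rintro _ ⟨m, rfl, hm⟩
  rw [Nat.cast_le, Nat.succ_le_iff]
  by_contra! hle
  exact hS₀L (hm S₀ (hS₀ ▸ hle))

theorem hasWZeroSubsumLen_of_zero_mem {W : Set ℤ} {G : Type*} [AddCommGroup G] {S : Multiset G}
    {L : Set ℕ} (hW : 1 ∈ W) (hL : 1 ∈ L) (h0 : 0 ∈ S) : HasWZeroSubsumLen W S L :=
  ⟨[(1, 0)], ⟨List.cons_ne_nil _ _, by simpa using hW, by simpa using h0, by simp⟩, hL⟩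

namespace Projectivization

variable {K V : Type*} [DivisionRing K] [AddCommGroup V] [Module K V]

theorem card_le_of_forall_ne_smul [Finite V] {S : Multiset V} (h0 : 0 ∉ S)
    (hS : ∀ v w : V, ∀ c : K, ↑[v, w] ≤ S → v ≠ c • w) :
    Multiset.card S ≤ Nat.card (ℙ K V) := by
  classical
  have hnd : S.Nodup := by
    refine Multiset.nodup_iff_ne_cons_cons.mpr fun v T hT ↦ hS v v 1 ?_ (one_smul K v).symm
    rw [hT]
    exact Multiset.cons_le_cons v (Multiset.singleton_le.mpr (Multiset.mem_cons_self v T))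
  have hne : ∀ v ∈ S.toFinset, v ≠ 0 := fun v hv h ↦ h0 (h ▸ Multiset.mem_toFinset.mp hv)
  have hinj : Function.Injective fun v : S.toFinset ↦ mk K v.1 (hne v.1 v.2) := by
    rintro ⟨v, hv⟩ ⟨w, hw⟩ hvw
    by_contra hne'
    have hvw' : v ≠ w := fun h ↦ hne' (Subtype.ext h)
    obtain ⟨c, hc⟩ := (mk_eq_mk_iff' K _ _ _ _).mp hvw
    refine hS v w c ?_ hc.symm
    rw [Multiset.le_iff_subset (by simpa using hvw')]
    intro x hx
    simp only [Multiset.mem_coe, List.mem_cons, List.not_mem_nil, or_false] at hx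
    rcases hx with rfl | rfl <;> simpa using ‹_ ∈ S.toFinset›
  have hcard := Nat.card_le_card_of_injective _ hinj
  rwa [Nat.card_eq_fintype_card, Fintype.card_coe, Multiset.toFinset_card_of_nodup hnd] at hcard

theorem exists_multiset_card_eq_forall_ne_smul [Finite V] :
    ∃ S : Multiset V, Multiset.card S = Nat.card (ℙ K V) ∧ 0 ∉ S ∧
      ∀ v w : V, ∀ c : K, ↑[v, w] ≤ S → v ≠ c • w := by
  classical
  have := Fintype.ofFinite (ℙ K V)
  have rep_injective : Function.Injective (Projectivization.rep : ℙ K V → V) := fun P Q h ↦ by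
    rw [← P.mk_rep, ← Q.mk_rep]
    simp only [h]
  refine ⟨(Finset.univ : Finset (ℙ K V)).val.map Projectivization.rep, by simp,
    by simp [rep_nonzero], ?_⟩
  intro v w c hle hvw
  have hnd : (↑[v, w] : Multiset V).Nodup :=
    Multiset.nodup_of_le hle (Finset.univ.nodup.map rep_injective)
  have hv := Multiset.mem_of_le hle (by simp : v ∈ ↑[v, w])
  have hw := Multiset.mem_of_le hle (by simp : w ∈ ↑[v, w])
  obtain ⟨P, -, rfl⟩ := Multiset.mem_map.mp hv
  obtain ⟨Q, -, rfl⟩ := Multiset.mem_map.mp hw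
  have hPQ : P = Q := by
    rw [← P.mk_rep, ← Q.mk_rep, mk_eq_mk_iff']
    exact ⟨c, hvw.symm⟩
  simp [hPQ] at hnd

end Projectivization

namespace ZMod

variable {p : ℕ}

theorem intCast_ne_zero_of_mem_Icc {w : ℤ} (hw : w ∈ Set.Icc 1 ((p : ℤ) - 1)) :
    (w : ZMod p) ≠ 0 := by
  rw [Ne, ZMod.intCast_zmod_eq_zero_iff_dvd]
  intro hdvd
  linarith [Int.le_of_dvd (by linarith [hw.1]) hdvd, hw.2]

theorem exists_mem_Icc_intCast_eq [NeZero p] {c : ZMod p} (hc : c ≠ 0) :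
    ∃ w ∈ Set.Icc 1 ((p : ℤ) - 1), (w : ZMod p) = c := by
  have hpos : 0 < c.val := ZMod.val_pos.mpr hc
  have hlt : c.val < p := c.val_lt
  exact ⟨c.val, ⟨by omega, by omega⟩, by simp⟩

end ZMod

section WeightedZeroSubsumsModP

variable {p : ℕ} [Fact p.Prime] {V : Type*} [AddCommGroup V] [Module (ZMod p) V]

theorem one_mem_Icc_one_pred : (1 : ℤ) ∈ Set.Icc 1 ((p : ℤ) - 1) := by
  have := (Fact.out : p.Prime).two_le
  constructor <;> omega

theorem hasWZeroSubsumLen_of_pair_le {S : Multiset V} {v w : V} {c : ZMod p}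
    (hle : ↑[v, w] ≤ S) (hvw : v = c • w) :
    HasWZeroSubsumLen (Set.Icc 1 ((p : ℤ) - 1)) S {t | 1 ≤ t ∧ t ≤ 2} := by
  by_cases hc : c = 0
  · refine hasWZeroSubsumLen_of_zero_mem one_mem_Icc_one_pred (by simp) ?_
    exact Multiset.mem_of_le hle (by simp [hvw, hc])
  obtain ⟨m, hm, hmc⟩ := ZMod.exists_mem_Icc_intCast_eq (neg_ne_zero.mpr hc)
  refine ⟨[(1, v), (m, w)], ⟨by simp, ?_, hle, ?_⟩, by simp⟩
  · simp only [List.mem_cons, List.not_mem_nil, or_false, forall_eq_or_imp, forall_eq]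
    exact ⟨one_mem_Icc_one_pred, hm⟩
  · simp [← Int.cast_smul_eq_zsmul (ZMod p), hmc, hvw]

theorem zero_mem_or_exists_pair_le_of_hasWZeroSubsumLen {S : Multiset V}
    (h : HasWZeroSubsumLen (Set.Icc 1 ((p : ℤ) - 1)) S {t | 1 ≤ t ∧ t ≤ 2}) :
    0 ∈ S ∨ ∃ v w : V, ∃ c : ZMod p, ↑[v, w] ≤ S ∧ v = c • w := by
  obtain ⟨l, ⟨-, hW, hle, hsum⟩, hlen1, hlen2⟩ := h
  rcases l with _ | ⟨⟨a, v⟩, _ | ⟨⟨b, w⟩, _ | ⟨_, l⟩⟩⟩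
  · simp at hlen1
  · have ha := ZMod.intCast_ne_zero_of_mem_Icc (hW (a, v) (by simp))
    simp only [← Int.cast_smul_eq_zsmul (ZMod p), List.map_cons, List.map_nil, List.sum_cons,
      List.sum_nil, add_zero] at hsum
    left
    simpa [(smul_eq_zero.mp hsum).resolve_left ha] using hle
  · have ha := ZMod.intCast_ne_zero_of_mem_Icc (hW (a, v) (by simp))
    simp only [← Int.cast_smul_eq_zsmul (ZMod p), List.map_cons, List.map_nil, List.sum_cons,
      List.sum_nil, add_zero] at hsum
    right
    refine ⟨v, w, -(a : ZMod p)⁻¹ * b, hle, ?_⟩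
    rw [mul_smul, neg_smul, ← smul_neg, ← eq_neg_of_add_eq_zero_left hsum, inv_smul_smul₀ ha]
  · simp at hlen2

theorem hasWZeroSubsumLen_le_two_iff {S : Multiset V} :
    HasWZeroSubsumLen (Set.Icc 1 ((p : ℤ) - 1)) S {t | 1 ≤ t ∧ t ≤ 2} ↔
      0 ∈ S ∨ ∃ v w : V, ∃ c : ZMod p, ↑[v, w] ≤ S ∧ v = c • w := by
  refine ⟨zero_mem_or_exists_pair_le_of_hasWZeroSubsumLen, ?_⟩
  rintro (h0 | ⟨v, w, c, hle, hvw⟩)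
  · exact hasWZeroSubsumLen_of_zero_mem one_mem_Icc_one_pred (by simp) h0
  · exact hasWZeroSubsumLen_of_pair_le hle hvw

variable (p V) in
theorem sWle_two_eq_one_add_card_projectivization [Finite V] :
    sWle (Set.Icc 1 ((p : ℤ) - 1)) V 2 = ((1 + Nat.card (ℙ (ZMod p) V) : ℕ) : ℕ∞) := by
  obtain ⟨S₀, hcard, h0, hpair⟩ :=
    Projectivization.exists_multiset_card_eq_forall_ne_smul (K := ZMod p) (V := V)
  rw [add_comm]
  refine sWL_eq_succ (fun S hS ↦ ?_) hcard ?_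
  · rw [hasWZeroSubsumLen_le_two_iff]
    by_contra! h
    have := Projectivization.card_le_of_forall_ne_smul h.1 h.2
    omega
  · rw [hasWZeroSubsumLen_le_two_iff]
    push Not
    exact ⟨h0, hpair⟩

end WeightedZeroSubsumsModP

/-- `s_{A,≤2}(C_p^r) = 1 + (p^r - 1)/(p - 1)`. -/
theorem stmt15 (p : ℕ) (hp : p.Prime) (r : ℕ) :
    sWle (Set.Icc 1 ((p : ℤ) - 1)) (Fin r → ZMod p) 2 =
      ((1 + (p ^ r - 1) / (p - 1) : ℕ) : ℕ∞) := by
  have := Fact.mk hp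
  rw [sWle_two_eq_one_add_card_projectivization, Projectivization.card'']
  simp
end

section
/- Let p be an odd prime and A = {1,…,p−1}. Then s_{A,≤3}(C_p) = 2, s_{A,≤3}(C_p^2) = 3, s_{A,≤3}(C_p^3) = 2 + p, and s_{A,≤3}(C_p^4) = 2 + p^2. -/
/-
Over `𝔽_p` every nonzero residue is a weight, so a weighted zero-subsum of length at most `d` is
either a repeated term or a linear dependence among at most `d` distinct terms. Hence
`s_{A,≤d}(𝔽_p^r) - 1` is the largest size of a set of vectors any `d` of which are linearly
independent; for `d = 3` these are the caps of `PG(r - 1, p)`. For `r ≤ 2` the answer is a basis.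
For `r = 3` a conic gives `p + 1` points, and `p + 2` points are impossible for odd `p` by Segre's
parity argument: every line through a point of the cap is a secant, so the lines through a point
off the cap pair its points up. For `r = 4` an elliptic quadric gives `p ^ 2 + 1` points, while
`p ^ 2 + 2` points are impossible: each of the `p + 1` planes through a secant line is a planar cap
containing at most `p - 1` further points.
-/

open scoped BigOperators

open Module Submodule

def IsIndepUpTo (K : Type*) {M : Type*} [Field K] [AddCommGroup M] [Module K M] (d : ℕ)
    (C : Finset M) : Prop :=
  ∀ s ⊆ C, s.card ≤ d → LinearIndepOn K id (s : Set M)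

namespace IsIndepUpTo

variable {K M : Type*} [Field K] [AddCommGroup M] [Module K M] {d : ℕ} {C : Finset M}

theorem mono {C' : Finset M} (hC : IsIndepUpTo K d C) (h : C' ⊆ C) : IsIndepUpTo K d C' :=
  fun s hs => hC s (hs.trans h)

theorem ne_zero (hC : IsIndepUpTo K d C) (hd : 1 ≤ d) {u : M} (hu : u ∈ C) : u ≠ 0 := by
  have := hC {u} (by simpa using hu) (by simpa using hd)
  rwa [Finset.coe_singleton, linearIndepOn_singleton_iff] at this

theorem mem_of_mem_span (hC : IsIndepUpTo K d C) {s : Finset M} (hs : s ⊆ C)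
    (hcard : s.card < d) {x : M} (hx : x ∈ C) (hspan : x ∈ span K (s : Set M)) : x ∈ s := by
  classical
  by_contra hxs
  have hind := hC (insert x s) (Finset.insert_subset hx hs)
    (by rw [Finset.card_insert_of_notMem hxs]; omega)
  rw [Finset.coe_insert, linearIndepOn_id_insert (by simpa using hxs)] at hind
  exact hind.2 hspan

theorem of_mem_span (h : ∀ s ⊆ C, s.card < d → ∀ x ∈ C, x ∈ span K (s : Set M) → x ∈ s) :
    IsIndepUpTo K d C := by
  classical
  intro s hs hcard
  induction s using Finset.induction_on with
  | empty => simp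
  | insert x s hxs ih =>
    rw [Finset.card_insert_of_notMem hxs] at hcard
    obtain ⟨hx, hsC⟩ := Finset.insert_subset_iff.mp hs
    rw [Finset.coe_insert, linearIndepOn_id_insert (by simpa using hxs)]
    exact ⟨ih hsC (by omega), fun hspan => hxs (h s hsC (by omega) x hx hspan)⟩

theorem of_map {N : Type*} [AddCommGroup N] [Module K N] {f : N →ₗ[K] M}
    (hf : Function.Injective f) {C : Finset N} (hC : IsIndepUpTo K d (C.map ⟨f, hf⟩)) :
    IsIndepUpTo K d C := by
  intro s hs hcard
  have := hC (s.map ⟨f, hf⟩) (Finset.map_subset_map.mpr hs) (by simpa using hcard)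
  rw [Finset.coe_map, Function.Embedding.coeFn_mk, ← linearIndepOn_iff_image hf.injOn] at this
  exact this.of_comp f

theorem card_le_finrank [FiniteDimensional K M] (hC : IsIndepUpTo K d C)
    (hd : finrank K M < d) : C.card ≤ finrank K M := by
  by_contra! hlt
  obtain ⟨s, hsC, hs⟩ := Finset.exists_subset_card_eq hlt
  have := finrank_span_finset_eq_card (hC s hsC (by omega))
  have := Submodule.finrank_le (span K (s : Set M))
  omega

theorem finrank_quotient_span_add_card [FiniteDimensional K M] (hC : IsIndepUpTo K d C)
    {s : Finset M} (hs : s ⊆ C) (hcard : s.card ≤ d) :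
    finrank K (M ⧸ span K (s : Set M)) + s.card = finrank K M := by
  rw [← finrank_span_finset_eq_card (hC s hs hcard)]
  exact finrank_quotient_add_finrank _

theorem mkQ_ne_zero (hC : IsIndepUpTo K d C) {s : Finset M} (hs : s ⊆ C) (hcard : s.card < d)
    {x : M} (hx : x ∈ C) (hxs : x ∉ s) : (span K (s : Set M)).mkQ x ≠ 0 := fun h0 =>
  hxs (hC.mem_of_mem_span hs hcard hx (by rwa [mkQ_apply, Quotient.mk_eq_zero] at h0))

end IsIndepUpTo

theorem exists_isIndepUpTo_card_eq_finrank {K M : Type*} [Field K] [AddCommGroup M] [Module K M]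
    [FiniteDimensional K M] (d : ℕ) : ∃ C : Finset M, IsIndepUpTo K d C ∧ C.card = finrank K M := by
  classical
  let b := Module.finBasis K M
  refine ⟨Finset.univ.image b, fun s hs _ => ?_, ?_⟩
  · refine ((linearIndepOn_id_range_iff b.injective).mpr b.linearIndependent).mono ?_
    simpa using Finset.coe_subset.mpr hs
  · rw [Finset.card_image_of_injective _ b.injective, Finset.card_univ, Fintype.card_fin]

section Relations

variable {K M : Type*} [Field K] [AddCommGroup M] [Module K M] [DecidableEq M] {d : ℕ}
  {S : Multiset M}

theorem IsIndepUpTo.list_sum_ne_zero (hS : S.Nodup) (hC : IsIndepUpTo K d S.toFinset)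
    {l : List (K × M)} (hne : l ≠ []) (hlen : l.length ≤ d) (hw : ∀ q ∈ l, q.1 ≠ 0)
    (hle : (↑(l.map Prod.snd) : Multiset M) ≤ S) : (l.map fun q => q.1 • q.2).sum ≠ 0 := by
  classical
  have hnd : (l.map Prod.snd).Nodup := Multiset.coe_nodup.mp (Multiset.nodup_of_le hle hS)
  have hinj : Set.InjOn Prod.snd (l.toFinset : Set (K × M)) := fun a ha b hb hab =>
    List.inj_on_of_nodup_map hnd (by simpa using ha) (by simpa using hb) hab
  have hsub : l.toFinset.image Prod.snd ⊆ S.toFinset := by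
    intro x hx
    simp only [Finset.mem_image, List.mem_toFinset] at hx
    obtain ⟨q, hq, rfl⟩ := hx
    exact Multiset.mem_toFinset.mpr (Multiset.mem_of_le hle (by simpa using ⟨q.1, hq⟩))
  have hind : LinearIndepOn K Prod.snd (l.toFinset : Set (K × M)) := by
    rw [linearIndepOn_iff_image hinj, ← Finset.coe_image]
    refine hC _ hsub ?_
    rwa [Finset.card_image_of_injOn hinj, List.toFinset_card_of_nodup (hnd.of_map _)]
  intro hsum
  rw [← List.sum_toFinset _ (hnd.of_map _)] at hsum
  obtain ⟨q, hq⟩ := List.exists_mem_of_ne_nil l hne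
  exact hw q hq (linearIndepOn_finset_iff.mp hind Prod.fst hsum q (List.mem_toFinset.mpr hq))

theorem exists_list_of_not_isIndepUpTo (hd : 2 ≤ d)
    (h : ¬ (S.Nodup ∧ IsIndepUpTo K d S.toFinset)) :
    ∃ l : List (K × M), l ≠ [] ∧ l.length ≤ d ∧ (∀ q ∈ l, q.1 ≠ 0) ∧
      (↑(l.map Prod.snd) : Multiset M) ≤ S ∧ (l.map fun q => q.1 • q.2).sum = 0 := by
  classical
  by_cases hS : S.Nodup
  · obtain ⟨s, hsS, hcard, hdep⟩ :
        ∃ s ⊆ S.toFinset, s.card ≤ d ∧ ¬ LinearIndepOn K id (s : Set M) := by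
      simpa [IsIndepUpTo, hS] using h
    obtain ⟨f, hf, x, hxs, hfx⟩ := not_linearIndepOn_finset_iff.mp hdep
    set t := s.filter (f · ≠ 0)
    refine ⟨t.toList.map fun y => (f y, y), ?_, ?_, ?_, ?_, ?_⟩
    · simpa [t] using ⟨x, hxs, hfx⟩
    · simpa using (Finset.card_filter_le _ _).trans hcard
    · simp only [List.mem_map, Finset.mem_toList, Finset.mem_filter, t]
      rintro _ ⟨y, ⟨-, hy⟩, rfl⟩
      exact hy
    · rw [List.map_map, Function.comp_def, List.map_id', Finset.coe_toList,
        Multiset.le_iff_subset t.nodup]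
      exact fun y hy => Multiset.mem_toFinset.mp (hsS (Finset.mem_of_mem_filter y hy))
    · rw [List.map_map, Function.comp_def, Finset.sum_map_toList, Finset.sum_filter_of_ne]
      · exact hf
      · rintro y - hy h0
        exact hy (by simp [h0])
  · obtain ⟨a, ha⟩ : ∃ a, 1 < S.count a := by simpa [Multiset.nodup_iff_count_le_one] using hS
    refine ⟨[(1, a), (-1, a)], by simp, by simpa using hd, by simp, ?_, by simp⟩
    simp only [List.map_cons, List.map_nil, ← Multiset.cons_coe]
    simpa [← Multiset.coe_replicate, List.replicate] using Multiset.le_count_iff_replicate_le.mp ha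

end Relations

section Davenport

variable {p : ℕ} [Fact p.Prime] {M : Type*} [AddCommGroup M] [Module (ZMod p) M]

/-- The weights `1, …, p - 1` are the integer lifts of the nonzero residues mod `p`. -/
theorem hasWZeroSubsumLen_iff_exists_list {S : Multiset M} {L : Set ℕ} :
    HasWZeroSubsumLen (Set.Icc 1 ((p : ℤ) - 1)) S L ↔
      ∃ l : List (ZMod p × M), l ≠ [] ∧ l.length ∈ L ∧ (∀ q ∈ l, q.1 ≠ 0) ∧
        (↑(l.map Prod.snd) : Multiset M) ≤ S ∧ (l.map fun q => q.1 • q.2).sum = 0 := by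
  have hp := (Fact.out : p.Prime).one_lt
  constructor
  · rintro ⟨l, ⟨hne, hw, hle, hsum⟩, hlen⟩
    refine ⟨l.map fun q => ((q.1 : ZMod p), q.2), by simpa using hne, by simpa using hlen, ?_,
      by simpa [Function.comp_def] using hle,
      by simpa [Function.comp_def, Int.cast_smul_eq_zsmul] using hsum⟩
    simp only [List.mem_map, forall_exists_index, and_imp]
    rintro _ q hq rfl h0
    obtain ⟨h1, h2⟩ := hw q hq
    have := Int.le_of_dvd (by omega) ((ZMod.intCast_zmod_eq_zero_iff_dvd _ _).mp h0)
    omega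
  · rintro ⟨l, hne, hlen, hw, hle, hsum⟩
    refine ⟨l.map fun q => ((q.1.val : ℤ), q.2), ⟨by simpa using hne, ?_,
      by simpa [Function.comp_def] using hle, ?_⟩, by simpa using hlen⟩
    · simp only [List.mem_map, forall_exists_index, and_imp]
      rintro _ q hq rfl
      have := ZMod.val_pos.mpr (hw q hq)
      have := ZMod.val_lt q.1
      simp only [Set.mem_Icc]
      omega
    · have hval : ∀ (c : ZMod p) (x : M), (c.val : ℤ) • x = c • x := fun c x => by
        rw [← Int.cast_smul_eq_zsmul (ZMod p), Int.cast_natCast, ZMod.natCast_zmod_val]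
      simpa only [List.map_map, Function.comp_def, hval] using hsum

variable [DecidableEq M] {d : ℕ}

theorem hasWZeroSubsumLen_iff_not_isIndepUpTo (hd : 2 ≤ d) {S : Multiset M} :
    HasWZeroSubsumLen (Set.Icc 1 ((p : ℤ) - 1)) S {t | 1 ≤ t ∧ t ≤ d} ↔
      ¬ (S.Nodup ∧ IsIndepUpTo (ZMod p) d S.toFinset) := by
  rw [hasWZeroSubsumLen_iff_exists_list]
  constructor
  · rintro ⟨l, hne, ⟨-, hlen⟩, hw, hle, hsum⟩ ⟨hS, hC⟩
    exact hC.list_sum_ne_zero hS hne hlen hw hle hsum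
  · intro h
    obtain ⟨l, hne, hlen, hw, hle, hsum⟩ := exists_list_of_not_isIndepUpTo hd h
    exact ⟨l, hne, ⟨List.length_pos_iff.mpr hne, hlen⟩, hw, hle, hsum⟩

theorem sWle_eq_of_isIndepUpTo {m : ℕ} (hd : 2 ≤ d)
    (hbound : ∀ C : Finset M, IsIndepUpTo (ZMod p) d C → C.card ≤ m)
    (hex : ∃ C : Finset M, IsIndepUpTo (ZMod p) d C ∧ C.card = m) :
    sWle (Set.Icc 1 ((p : ℤ) - 1)) M d = ((m + 1 : ℕ) : ℕ∞) := by
  refine le_antisymm (sInf_le ⟨m + 1, rfl, fun S hS => ?_⟩) (le_sInf ?_)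
  · rw [hasWZeroSubsumLen_iff_not_isIndepUpTo hd]
    rintro ⟨hS', hC⟩
    have := hbound _ hC
    rw [Multiset.toFinset_card_of_nodup hS'] at this
    omega
  · rintro _ ⟨n, rfl, hn⟩
    obtain ⟨C, hC, rfl⟩ := hex
    by_contra! hlt
    have := hn C.val (by norm_cast at hlt; simp only [Finset.card_val]; omega)
    rw [hasWZeroSubsumLen_iff_not_isIndepUpTo hd, Finset.val_toFinset] at this
    exact this ⟨C.nodup, hC⟩

theorem sWle_eq_finrank_add_one [FiniteDimensional (ZMod p) M] (hd : 2 ≤ d)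
    (h : finrank (ZMod p) M < d) :
    sWle (Set.Icc 1 ((p : ℤ) - 1)) M d = ((finrank (ZMod p) M + 1 : ℕ) : ℕ∞) :=
  sWle_eq_of_isIndepUpTo hd (fun _ hC => hC.card_le_finrank h)
    (exists_isIndepUpTo_card_eq_finrank d)

end Davenport

section Geometry

variable {K M : Type*} [Field K] [AddCommGroup M] [Module K M] {C : Finset M}

/-- Since `B (a • y + b • z) (a • y + b • z) = 2 a b B y z`, no point of `C` is a combination of
two others. -/
theorem isIndepUpTo_three_of_bilinForm {B : LinearMap.BilinForm K M} (hB : B.IsSymm)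
    (h2 : (2 : K) ≠ 0) (h0 : 0 ∉ C) (hself : ∀ x ∈ C, B x x = 0)
    (hne : ∀ x ∈ C, ∀ y ∈ C, x ≠ y → B x y ≠ 0) : IsIndepUpTo K 3 C := by
  classical
  refine .of_mem_span fun s hs hcard x hx hspan => ?_
  by_contra hxs
  have hne' : ∀ y ∈ s, B x y ≠ 0 := fun y hy => hne x hx y (hs hy) (fun h => hxs (h ▸ hy))
  interval_cases h : s.card
  · rw [Finset.card_eq_zero.mp h, Finset.coe_empty, span_empty, mem_bot] at hspan
    exact h0 (hspan ▸ hx)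
  · obtain ⟨y, rfl⟩ := Finset.card_eq_one.mp h
    obtain ⟨a, rfl⟩ := mem_span_singleton.mp (by simpa using hspan)
    exact hne' y (by simp) (by simp [hself y (hs (by simp))])
  · obtain ⟨y, z, hyz, rfl⟩ := Finset.card_eq_two.mp h
    obtain ⟨a, b, rfl⟩ := mem_span_pair.mp (by simpa using hspan)
    have hy := hself y (hs (by simp))
    have hz := hself z (hs (by simp))
    have hxx : 2 * a * b * B y z = 0 := by
      have := hself _ hx
      simp only [map_add, map_smul, LinearMap.add_apply, LinearMap.smul_apply, smul_eq_mul, hy,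
        hz, hB.eq z y] at this
      linear_combination this
    rcases mul_eq_zero.mp hxx with hab | hyz'
    · rcases mul_eq_zero.mp hab with ha | rfl
      · rcases mul_eq_zero.mp ha with h2' | rfl
        · exact h2 h2'
        · exact hne' z (by simp) (by simp [hz])
      · exact hne' y (by simp) (by simp [hy])
    · exact hne y (hs (by simp)) z (hs (by simp)) hyz hyz'

theorem isIndepUpTo_three_insert_image [DecidableEq M] {ι : Type*} [Fintype ι]
    {B : LinearMap.BilinForm K M} (hB : B.IsSymm) (h2 : (2 : K) ≠ 0) {f : ι → M} {z : M}
    (hz : z ≠ 0) (hzz : B z z = 0) (hff : ∀ i, B (f i) (f i) = 0) (hfz : ∀ i, B (f i) z ≠ 0)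
    (hfij : ∀ i j, i ≠ j → B (f i) (f j) ≠ 0) :
    IsIndepUpTo K 3 (insert z (Finset.univ.image f)) ∧
      (insert z (Finset.univ.image f)).card = Fintype.card ι + 1 := by
  have hfz' : ∀ i, f i ≠ z := fun i h => hfz i (by rw [h, hzz])
  have hf : Function.Injective f := fun i j h => by
    by_contra hij
    exact hfij i j hij (by rw [h, hff])
  have hmem : ∀ x, x ∈ insert z (Finset.univ.image f) ↔ x = z ∨ ∃ i, f i = x := by simp
  refine ⟨isIndepUpTo_three_of_bilinForm hB h2 ?_ ?_ ?_, ?_⟩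
  · rw [hmem]
    rintro (h | ⟨i, h⟩)
    · exact hz h.symm
    · exact hfz i (by rw [h, map_zero, LinearMap.zero_apply])
  · intro x hx
    rcases (hmem x).mp hx with rfl | ⟨i, rfl⟩
    exacts [hzz, hff i]
  · intro x hx y hy hxy
    rcases (hmem x).mp hx with rfl | ⟨i, rfl⟩ <;> rcases (hmem y).mp hy with rfl | ⟨j, rfl⟩
    · exact absurd rfl hxy
    · rw [hB.eq]
      exact hfz j
    · exact hfz i
    · exact hfij i j fun h => hxy (h ▸ rfl)
  · rw [Finset.card_insert_of_notMem (by simpa using hfz'), Finset.card_image_of_injective _ hf,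
      Finset.card_univ]

theorem exists_forall_notMem_span_singleton [Fintype K] (s : Finset M)
    (hs : s.card * Fintype.card K < Nat.card M) : ∃ w : M, ∀ c ∈ s, w ∉ K ∙ c := by
  classical
  have : Finite M := Nat.finite_of_card_ne_zero (by omega)
  have := Fintype.ofFinite M
  let T := s.biUnion fun c => Finset.univ.image fun a : K => a • c
  have hT : T.card < (Finset.univ : Finset M).card := by
    calc T.card ≤ s.card * Fintype.card K :=
          Finset.card_biUnion_le_card_mul _ _ _ fun c _ => Finset.card_image_le
      _ < _ := by rwa [Finset.card_univ, ← Nat.card_eq_fintype_card (α := M)]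
  obtain ⟨w, -, hw⟩ := Finset.exists_mem_notMem_of_card_lt_card hT
  refine ⟨w, fun c hc hwc => hw ?_⟩
  obtain ⟨a, rfl⟩ := mem_span_singleton.mp hwc
  exact Finset.mem_biUnion.mpr ⟨c, hc, Finset.mem_image_of_mem _ (Finset.mem_univ a)⟩

theorem mem_span_insert_of_mk_mkQ_eq {t : Set M} {x y : M} (hx : (span K t).mkQ x ≠ 0)
    (hy : (span K t).mkQ y ≠ 0) (h : Projectivization.mk K _ hy = Projectivization.mk K _ hx) :
    y ∈ span K (insert x t) := by
  obtain ⟨a, ha⟩ := (Projectivization.mk_eq_mk_iff' K _ _ hy hx).mp h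
  have hyx : y - a • x ∈ span K t := by
    rw [← Quotient.mk_eq_zero, Quotient.mk_sub, Quotient.mk_smul]
    exact sub_eq_zero.mpr ha.symm
  rw [← sub_add_cancel y (a • x)]
  exact add_mem (span_mono (Set.subset_insert x t) hyx)
    (smul_mem _ a (subset_span (Set.mem_insert x t)))

theorem Finset.even_card_of_involution {α : Type*} {s : Finset α} {g : α → α}
    (hg_mem : ∀ a ∈ s, g a ∈ s) (hg_ne : ∀ a ∈ s, g a ≠ a) (hg_inv : ∀ a ∈ s, g (g a) = a) :
    Even s.card := by
  have := Finset.sum_involution (f := fun _ => (1 : ZMod 2)) (fun a _ => g a) (fun _ _ => rfl)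
    (fun a ha _ => hg_ne a ha) hg_mem hg_inv
  simpa [ZMod.natCast_eq_zero_iff_even] using this

namespace IsIndepUpTo

theorem eq_of_mem_span_pair (hC : IsIndepUpTo K 3 C) {u v v' w : M} (hu : u ∈ C) (hv : v ∈ C)
    (hv' : v' ∈ C) (hvu : v ≠ u) (hw : w ∉ K ∙ u) (h : w ∈ span K {u, v})
    (h' : w ∈ span K {u, v'}) : v = v' := by
  classical
  obtain ⟨a, b, rfl⟩ := mem_span_pair.mp h
  have hb : b ≠ 0 := by
    rintro rfl
    exact hw (by simpa using smul_mem _ a (mem_span_singleton_self u))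
  have hv_span : v ∈ span K {u, v'} := by
    rw [show v = b⁻¹ • ((a • u + b • v) - a • u) by
      rw [add_sub_cancel_left, smul_smul, inv_mul_cancel₀ hb, one_smul]]
    exact smul_mem _ _ (sub_mem h' (smul_mem _ _ (subset_span (by simp))))
  have := hC.mem_of_mem_span (s := {u, v'}) (by simp [Finset.insert_subset_iff, hu, hv'])
    (Finset.card_le_two.trans_lt (by norm_num)) hv (by simpa using hv_span)
  simpa [hvu] using this

/-- Projecting from `u`, the other `q + 1` points of `C` go injectively, hence bijectively, to the
`q + 1` points of the projective line `ℙ(M ⧸ K ∙ u)`. -/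
theorem exists_mem_span_pair [Fintype K] (hM : finrank K M = 3) (hC : IsIndepUpTo K 3 C)
    (hcard : C.card = Fintype.card K + 2) {u : M} (hu : u ∈ C) (w : M) :
    ∃ v ∈ C, v ≠ u ∧ w ∈ span K {u, v} := by
  classical
  have : FiniteDimensional K M := .of_finrank_eq_succ hM
  have : Finite M := Module.finite_of_finite K
  have huC : {u} ⊆ C := by simpa using hu
  set U := span K (({u} : Finset M) : Set M)
  have : Finite (M ⧸ U) := Module.finite_of_finite K
  have hquot : finrank K (M ⧸ U) = 2 := by
    have : finrank K (M ⧸ U) + ({u} : Finset M).card = finrank K M :=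
      hC.finrank_quotient_span_add_card huC (by simp)
    rw [Finset.card_singleton, hM] at this
    omega
  have hρ : ∀ v ∈ C.erase u, U.mkQ v ≠ 0 := fun v hv =>
    hC.mkQ_ne_zero huC (by simp) (Finset.mem_of_mem_erase hv)
      (by simpa using Finset.ne_of_mem_erase hv)
  let f : C.erase u → Projectivization K (M ⧸ U) := fun v => .mk K _ (hρ v v.2)
  have hf : Function.Injective f := by
    rintro ⟨v, hv⟩ ⟨v', hv'⟩ h
    have := hC.mem_of_mem_span (s := {v, u})
      (by simp [Finset.insert_subset_iff, hu, Finset.mem_of_mem_erase hv])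
      (Finset.card_le_two.trans_lt (by norm_num)) (Finset.mem_of_mem_erase hv')
      (by simpa using mem_span_insert_of_mk_mkQ_eq _ _ h.symm)
    simpa [Finset.ne_of_mem_erase hv', eq_comm] using this
  have hbij : Function.Bijective f := hf.bijective_of_nat_card_le <| by
    rw [Projectivization.card_of_finrank_two K _ hquot, Nat.card_eq_finsetCard,
      Finset.card_erase_of_mem hu, hcard, Nat.card_eq_fintype_card]
    omega
  by_cases hw : U.mkQ w = 0
  · obtain ⟨v, hv⟩ : (C.erase u).Nonempty := by
      rw [← Finset.card_pos, Finset.card_erase_of_mem hu]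
      omega
    rw [mkQ_apply, Quotient.mk_eq_zero] at hw
    exact ⟨v, Finset.mem_of_mem_erase hv, Finset.ne_of_mem_erase hv,
      span_mono (by simp) hw⟩
  · obtain ⟨⟨v, hv⟩, hfv⟩ := hbij.2 (.mk K _ hw)
    refine ⟨v, Finset.mem_of_mem_erase hv, Finset.ne_of_mem_erase hv, ?_⟩
    simpa [Set.pair_comm] using mem_span_insert_of_mk_mkQ_eq _ _ hfv.symm

/-- Segre: for a point `w` on none of the lines `K ∙ c`, sending `u` to the other point of `C` on
the line through `u` and `w` would be a fixed-point-free involution of a set of odd size `q + 2`. -/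
theorem card_le_of_finrank_eq_three [Fintype K] (hK : ringChar K ≠ 2) (hM : finrank K M = 3)
    (hC : IsIndepUpTo K 3 C) : C.card ≤ Fintype.card K + 1 := by
  set q := Fintype.card K
  have hq : Odd q := Nat.odd_iff.mpr (FiniteField.odd_card_of_char_ne_two hK)
  have hq3 : 3 ≤ q := by
    have : 1 < q := Fintype.one_lt_card
    obtain ⟨k, hk⟩ := hq
    omega
  have : FiniteDimensional K M := .of_finrank_eq_succ hM
  by_contra! hlt
  obtain ⟨A, hAC, hA⟩ := Finset.exists_subset_card_eq (show q + 2 ≤ C.card by omega)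
  replace hC := hC.mono hAC
  obtain ⟨w, hw⟩ := exists_forall_notMem_span_singleton (K := K) A <| by
    rw [hA, Module.natCard_eq_pow_finrank (K := K), hM, Nat.card_eq_fintype_card (α := K)]
    show (q + 2) * q < q ^ 3
    nlinarith [Nat.mul_le_mul_left (q * q) hq3]
  choose! g hg_mem hg_ne hg_span using fun u (hu : u ∈ A) => hC.exists_mem_span_pair hM hA hu w
  have heven : Even A.card := Finset.even_card_of_involution hg_mem hg_ne fun u hu =>
    hC.eq_of_mem_span_pair (hg_mem u hu) (hg_mem _ (hg_mem u hu)) hu (hg_ne _ (hg_mem u hu))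
      (hw _ (hg_mem u hu)) (hg_span _ (hg_mem u hu)) (by rw [Set.pair_comm]; exact hg_span u hu)
  rw [hA] at heven
  exact Nat.not_even_iff_odd.mpr (hq.add_even even_two) heven

theorem card_le_of_finrank_span_le_three [Fintype K] (hK : ringChar K ≠ 2)
    (hC : IsIndepUpTo K 3 C) (h : finrank K (span K (C : Set M)) ≤ 3) :
    C.card ≤ Fintype.card K + 1 := by
  classical
  set W := span K (C : Set M)
  have hmap : (C.subtype (· ∈ W)).map ⟨W.subtype, W.injective_subtype⟩ = C :=
    Finset.subtype_map_of_mem fun x hx => subset_span hx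
  have hW : IsIndepUpTo K 3 (C.subtype (· ∈ W)) := .of_map W.injective_subtype (by rwa [hmap])
  rw [← hmap, Finset.card_map]
  rcases h.lt_or_eq with hlt | heq
  · have := hW.card_le_finrank hlt
    have : 1 < Fintype.card K := Fintype.one_lt_card
    omega
  · exact hW.card_le_of_finrank_eq_three hK heq

theorem card_add_two_le_of_subset_span [Fintype K] (hK : ringChar K ≠ 2) (hC : IsIndepUpTo K 3 C)
    {F : Finset M} (hFC : F ⊆ C) {x u v : M} (hu : u ∈ C) (hv : v ∈ C) (huv : u ≠ v)
    (huF : u ∉ F) (hvF : v ∉ F) (hF : (F : Set M) ⊆ span K {x, u, v}) :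
    F.card + 2 ≤ Fintype.card K + 1 := by
  classical
  have hD : (insert u (insert v F)).card = F.card + 2 := by
    rw [Finset.card_insert_of_notMem (by simp [huv, huF]), Finset.card_insert_of_notMem hvF]
  have hDspan : ((insert u (insert v F) : Finset M) : Set M) ⊆
      span K (({x, u, v} : Finset M) : Set M) := by
    simp only [Finset.coe_insert, Finset.coe_singleton, Set.insert_subset_iff]
    exact ⟨subset_span (by simp), subset_span (by simp), hF⟩
  rw [← hD]
  have hDC : insert u (insert v F) ⊆ C := by simp [Finset.insert_subset_iff, hu, hv, hFC]
  refine (hC.mono hDC).card_le_of_finrank_span_le_three hK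
    ((finrank_mono (span_le.mpr hDspan)).trans ?_)
  exact (finrank_span_finset_le_card _).trans Finset.card_le_three

/-- Project from the line through `u` and `v` onto `ℙ(M ⧸ span {u, v})`: each of the `q + 1`
fibres spans a plane with `u` and `v`, so holds at most `q - 1` points. -/
theorem card_erase_erase_le [Fintype K] [DecidableEq M] (hK : ringChar K ≠ 2) (hM : finrank K M = 4)
    (hC : IsIndepUpTo K 3 C) {u v : M} (hu : u ∈ C) (hv : v ∈ C) (huv : u ≠ v) :
    ((C.erase u).erase v).card ≤ (Fintype.card K - 1) * (Fintype.card K + 1) := by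
  classical
  have : FiniteDimensional K M := .of_finrank_eq_succ hM
  have : Finite M := Module.finite_of_finite K
  have huvC : ({u, v} : Finset M) ⊆ C := by simp [Finset.insert_subset_iff, hu, hv]
  set U := span K (({u, v} : Finset M) : Set M)
  have hquot : finrank K (M ⧸ U) = 2 := by
    have : finrank K (M ⧸ U) + ({u, v} : Finset M).card = finrank K M :=
      hC.finrank_quotient_span_add_card huvC (Finset.card_le_two.trans (by norm_num))
    rw [Finset.card_pair huv, hM] at this
    omega
  have : Finite (M ⧸ U) := Module.finite_of_finite K
  have := Fintype.ofFinite (Projectivization K (M ⧸ U))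
  set s := (C.erase u).erase v
  have hsC : ∀ x ∈ s, x ∈ C ∧ x ≠ u ∧ x ≠ v := fun x hx => by
    simp only [s, Finset.mem_erase] at hx
    exact ⟨hx.2.2, hx.2.1, hx.1⟩
  have hρ : ∀ x ∈ s, U.mkQ x ≠ 0 := fun x hx =>
    hC.mkQ_ne_zero huvC (Finset.card_le_two.trans_lt (by norm_num)) (hsC x hx).1
      (by simp [(hsC x hx).2.1, (hsC x hx).2.2])
  let f : s → Projectivization K (M ⧸ U) := fun x => .mk K _ (hρ x x.2)
  have hfib : ∀ τ, (Finset.univ.filter (f · = τ)).card ≤ Fintype.card K - 1 := by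
    intro τ
    set F := Finset.univ.filter (f · = τ)
    rcases F.eq_empty_or_nonempty with hF | ⟨x₀, hx₀⟩
    · simp [hF]
    have := hC.card_add_two_le_of_subset_span hK (F := F.map (Function.Embedding.subtype _))
      (fun x hx => by
        obtain ⟨y, -, rfl⟩ := Finset.mem_map.mp hx
        exact (hsC y y.2).1)
      (x := x₀) hu hv huv (by simpa using fun hu' => absurd rfl (hsC u hu').2.1)
      (by simpa using fun hv' => absurd rfl (hsC v hv').2.2)
      (fun x hx => by
        obtain ⟨y, hy, rfl⟩ := Finset.mem_map.mp hx
        have hfy : f y = f x₀ := (Finset.mem_filter.mp hy).2.trans (Finset.mem_filter.mp hx₀).2.symm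
        simpa using mem_span_insert_of_mk_mkQ_eq _ _ hfy)
    rw [Finset.card_map] at this
    omega
  have := Finset.card_le_mul_card_image_of_maps_to (s := Finset.univ) (t := Finset.univ)
    (f := f) (fun _ _ => Finset.mem_univ _) _ (fun τ _ => hfib τ)
  rwa [Finset.card_univ, Fintype.card_coe, Finset.card_univ,
    ← Nat.card_eq_fintype_card (α := Projectivization K (M ⧸ U)),
    Projectivization.card_of_finrank_two K _ hquot, Nat.card_eq_fintype_card (α := K)] at this

theorem card_le_of_finrank_eq_four [Fintype K] (hK : ringChar K ≠ 2) (hM : finrank K M = 4)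
    (hC : IsIndepUpTo K 3 C) : C.card ≤ Fintype.card K ^ 2 + 1 := by
  classical
  by_contra! hlt
  obtain ⟨A, hAC, hA⟩ :=
    Finset.exists_subset_card_eq (show Fintype.card K ^ 2 + 2 ≤ C.card by omega)
  obtain ⟨u, hu, v, hv, huv⟩ := Finset.one_lt_card.mp (show 1 < A.card by omega)
  have hcount := (hC.mono hAC).card_erase_erase_le hK hM hu hv huv
  rw [Finset.card_erase_of_mem (Finset.mem_erase.mpr ⟨huv.symm, hv⟩), Finset.card_erase_of_mem hu,
    hA, show Fintype.card K ^ 2 + 2 - 1 - 1 = Fintype.card K ^ 2 by omega] at hcount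
  have : 1 ≤ Fintype.card K := Fintype.card_pos
  zify [this] at hcount
  nlinarith

end IsIndepUpTo

end Geometry

theorem eq_zero_of_sq_sub_mul_sq_eq_zero {K : Type*} [Field K] {d s t : K} (hd : ¬IsSquare d)
    (h : s ^ 2 - d * t ^ 2 = 0) : s = 0 ∧ t = 0 := by
  by_cases ht : t = 0
  · subst ht
    exact ⟨pow_eq_zero_iff two_ne_zero |>.mp (by simpa using h), rfl⟩
  · exact absurd ⟨s / t, by field_simp; linear_combination -h⟩ hd

section Constructions

variable {K : Type*} [Field K] [Fintype K]

theorem exists_isIndepUpTo_three_card_eq_card_add_one (h2 : (2 : K) ≠ 0) :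
    ∃ C : Finset (Fin 3 → K), IsIndepUpTo K 3 C ∧ C.card = Fintype.card K + 1 := by
  classical
  -- the polar form of `x₁² - x₀ x₂`, which vanishes on the conic `{(1, t, t²)} ∪ {(0, 0, 1)}`
  let B := Matrix.toBilin' !![(0 : K), 0, -1; 0, 2, 0; -1, 0, 0]
  have hB : B.IsSymm := Matrix.isSymm_toBilin'_iff_isSymm.mpr <|
    Matrix.IsSymm.ext fun i j => by fin_cases i <;> fin_cases j <;> rfl
  let pt : K → Fin 3 → K := fun t => ![1, t, t ^ 2]
  have hB_pt : ∀ t s, B (pt t) (pt s) = -(t - s) ^ 2 := fun t s => by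
    simp only [Matrix.toBilin'_apply, Matrix.of_apply, Matrix.cons_val', Matrix.cons_val_fin_one,
      Fin.sum_univ_three, Fin.isValue, Matrix.cons_val_zero, Matrix.cons_val_one, Matrix.cons_val,
      B, pt]
    ring
  exact ⟨_, isIndepUpTo_three_insert_image (f := pt) (z := ![0, 0, 1]) hB h2
    (fun h => by simpa using congrFun h 2) (by simp [B, Matrix.toBilin'_apply, Fin.sum_univ_three])
    (fun t => by simp [hB_pt]) (fun t => by simp [B, pt, Matrix.toBilin'_apply, Fin.sum_univ_three])
    (fun t s hts => by simpa [hB_pt, sub_eq_zero] using hts)⟩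

theorem exists_isIndepUpTo_three_card_eq_sq_add_one (hK : ringChar K ≠ 2) :
    ∃ C : Finset (Fin 4 → K), IsIndepUpTo K 3 C ∧ C.card = Fintype.card K ^ 2 + 1 := by
  classical
  obtain ⟨d, hd⟩ := FiniteField.exists_nonsquare hK
  -- the polar form of the elliptic quadric `x₂² - d x₃² - x₀ x₁`
  let B := Matrix.toBilin' !![(0 : K), -1, 0, 0; -1, 0, 0, 0; 0, 0, 2, 0; 0, 0, 0, -2 * d]
  have hB : B.IsSymm := Matrix.isSymm_toBilin'_iff_isSymm.mpr <|
    Matrix.IsSymm.ext fun i j => by fin_cases i <;> fin_cases j <;> rfl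
  let pt : K × K → Fin 4 → K := fun q => ![1, q.1 ^ 2 - d * q.2 ^ 2, q.1, q.2]
  have hB_pt : ∀ q r, B (pt q) (pt r) = -((q.1 - r.1) ^ 2 - d * (q.2 - r.2) ^ 2) := fun q r => by
    simp only [Matrix.toBilin'_apply, Matrix.of_apply, Matrix.cons_val', Matrix.cons_val_fin_one,
      Fin.sum_univ_four, Fin.isValue, Matrix.cons_val_zero, Matrix.cons_val_one, Matrix.cons_val,
      B, pt]
    ring
  obtain ⟨hC, hcard⟩ := isIndepUpTo_three_insert_image (f := pt) (z := ![0, 1, 0, 0]) hB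
    (Ring.two_ne_zero hK) (fun h => by simpa using congrFun h 1)
    (by simp [B, Matrix.toBilin'_apply, Fin.sum_univ_four]) (fun q => by simp [hB_pt])
    (fun q => by simp [B, pt, Matrix.toBilin'_apply, Fin.sum_univ_four])
    (fun q r hqr h => hqr <| by
      obtain ⟨h1, h2⟩ := eq_zero_of_sq_sub_mul_sq_eq_zero hd (neg_eq_zero.mp (hB_pt q r ▸ h))
      exact Prod.ext (sub_eq_zero.mp h1) (sub_eq_zero.mp h2))
  exact ⟨_, hC, by rw [hcard, Fintype.card_prod, sq]⟩

end Constructions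

/-- for `p` an odd prime, `s_{A,≤3}(C_p) = 2`, `s_{A,≤3}(C_p^2) = 3`,
`s_{A,≤3}(C_p^3) = 2 + p`, and `s_{A,≤3}(C_p^4) = 2 + p²`. -/
theorem stmt16 (p : ℕ) (hp : p.Prime) (hodd : Odd p) :
    sWle (Set.Icc 1 ((p : ℤ) - 1)) (Fin 1 → ZMod p) 3 = ((2 : ℕ) : ℕ∞) ∧
    sWle (Set.Icc 1 ((p : ℤ) - 1)) (Fin 2 → ZMod p) 3 = ((3 : ℕ) : ℕ∞) ∧
    sWle (Set.Icc 1 ((p : ℤ) - 1)) (Fin 3 → ZMod p) 3 = ((2 + p : ℕ) : ℕ∞) ∧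
    sWle (Set.Icc 1 ((p : ℤ) - 1)) (Fin 4 → ZMod p) 3 = ((2 + p ^ 2 : ℕ) : ℕ∞) := by
  have : Fact p.Prime := ⟨hp⟩
  have hchar : ringChar (ZMod p) ≠ 2 := by
    rw [ZMod.ringChar_zmod_n]
    rintro rfl
    exact Nat.not_even_iff_odd.mpr hodd even_two
  have hcard : Fintype.card (ZMod p) = p := ZMod.card p
  refine ⟨?_, ?_, ?_, ?_⟩
  · simpa using sWle_eq_finrank_add_one (p := p) (M := Fin 1 → ZMod p) (d := 3) (by norm_num)
      (by simp)
  · simpa using sWle_eq_finrank_add_one (p := p) (M := Fin 2 → ZMod p) (d := 3) (by norm_num)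
      (by simp)
  · rw [show 2 + p = p + 1 + 1 by ring]
    refine sWle_eq_of_isIndepUpTo (by norm_num)
      (fun C hC => by simpa [hcard] using hC.card_le_of_finrank_eq_three hchar (by simp)) ?_
    simpa [hcard] using exists_isIndepUpTo_three_card_eq_card_add_one (Ring.two_ne_zero hchar)
  · rw [show 2 + p ^ 2 = p ^ 2 + 1 + 1 by ring]
    refine sWle_eq_of_isIndepUpTo (by norm_num)
      (fun C hC => by simpa [hcard] using hC.card_le_of_finrank_eq_four hchar (by simp)) ?_
    simpa [hcard] using exists_isIndepUpTo_three_card_eq_sq_add_one hchar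
end

section
/- Let p be a prime and A = {1,…,p−1}. Then (1) D_{A,m}(C_p) = 2m for every m ∈ ℕ; and (2) D_{A,m}(C_p^2) = 3m for m ≤ ⌈p/3⌉ and D_{A,m}(C_p^2) = 2m + ⌈p/3⌉ for m > ⌈p/3⌉. -/
open scoped BigOperators

/-!
Over `ZMod p` every weight in `{1, …, p - 1}` is a unit, so a weighted zero-subsum is a linear
relation with nonzero coefficients among some terms of the sequence. Any `r + 1` vectors of an
`r`-dimensional space are dependent, and among more nonzero vectors than there are projective
points two are parallel; peeling off such short zero-subsums one at a time gives the upper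
bounds. For the lower bounds take representatives of distinct projective points, all used once
except one that is repeated: then only two copies of the repeated vector form a zero-subsum of
length less than three, and a weight count leaves no room for `m` disjoint zero-subsums.
-/

open scoped LinearAlgebra.Projectivization

section DisjointZeroSubsums

variable {G : Type*} [AddCommGroup G] {W : Set ℤ}

theorem hasDisjointWZeroSubsums_zero (S : Multiset G) : HasDisjointWZeroSubsums W S 0 :=
  ⟨[], rfl, by simp, by simp⟩

theorem HasDisjointWZeroSubsums.add_one [DecidableEq G] {S : Multiset G} {l : List (ℤ × G)}
    {m : ℕ} (h : HasDisjointWZeroSubsums W (S - (l.map Prod.snd : Multiset G)) m)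
    (hl : IsWZeroSubsum W S l) : HasDisjointWZeroSubsums W S (m + 1) := by
  obtain ⟨hne, hW, hle, hsum⟩ := hl
  obtain ⟨ls, hlen, hls, hsub⟩ := h
  refine ⟨l :: ls, by simp [hlen], ?_, ?_⟩
  · rintro l' (_ | ⟨_, hl'⟩)
    exacts [⟨hne, hW, hsum⟩, hls l' hl']
  · simpa [add_comm] using (le_tsub_iff_right hle).mp hsub

theorem hasDisjointWZeroSubsums_add_of_short {n d N m₀ : ℕ}
    (hshort : ∀ S : Multiset G, n ≤ S.card → ∃ l, IsWZeroSubsum W S l ∧ l.length ≤ d)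
    (hbase : ∀ S : Multiset G, N ≤ S.card → HasDisjointWZeroSubsums W S m₀)
    (hn : n ≤ N + d) (k : ℕ) (S : Multiset G) (hS : N + d * k ≤ S.card) :
    HasDisjointWZeroSubsums W S (m₀ + k) := by
  classical
  induction k generalizing S with
  | zero => exact hbase S hS
  | succ k ih =>
    rw [mul_add_one] at hS
    obtain ⟨l, hl, hlen⟩ := hshort S (by omega)
    refine (ih _ ?_).add_one hl
    rw [Multiset.card_sub hl.2.2.1, Multiset.coe_card, List.length_map]
    omega

theorem HasDisjointWZeroSubsums.mul_le_sum_map {S : Multiset G} {m k : ℕ} (f : G → ℕ)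
    (hf : ∀ l, IsWZeroSubsum W S l → k ≤ (l.map fun q => f q.2).sum)
    (h : HasDisjointWZeroSubsums W S m) : m * k ≤ (S.map f).sum := by
  obtain ⟨ls, rfl, hls, hsub⟩ := h
  obtain ⟨T, rfl⟩ := Multiset.le_iff_exists_add.mp hsub
  have hk : ∀ l ∈ ls, k ≤ (l.map fun q => f q.2).sum := fun l hl =>
    have hl' := hls l hl
    hf l ⟨hl'.1, hl'.2.1, le_trans (Multiset.coe_le.mpr
      ((List.sublist_flatten_of_mem hl).map Prod.snd).subperm) le_self_add, hl'.2.2⟩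
  calc ls.length * k ≤ (ls.map fun l => (l.map fun q => f q.2).sum).sum := by
        simpa using List.sum_le_sum (f := fun _ => k) hk
    _ = ((ls.flatten.map Prod.snd).map f).sum := by
        simp [List.map_flatten, List.sum_flatten, Function.comp_def]
    _ ≤ _ := by simp

theorem DW_eq_of_forall_of_not {m n : ℕ}
    (hup : ∀ S : Multiset G, n ≤ S.card → HasDisjointWZeroSubsums W S m)
    {S₀ : Multiset G} (hS₀ : ¬ HasDisjointWZeroSubsums W S₀ m) (hcard : S₀.card + 1 = n) :
    DW W G m = n := by
  refine le_antisymm (Nat.sInf_le hup) (le_csInf ⟨n, hup⟩ fun b hb => ?_)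
  by_contra! hbn
  exact hS₀ (hb S₀ (by omega))

end DisjointZeroSubsums

section ZModModule

variable {p : ℕ} {V : Type*} [AddCommGroup V] [Module (ZMod p) V]

theorem intCast_zmod_ne_zero_of_mem_Icc {w : ℤ} (hw : w ∈ Set.Icc 1 ((p : ℤ) - 1)) :
    (w : ZMod p) ≠ 0 := by
  rw [Ne, ZMod.intCast_zmod_eq_zero_iff_dvd]
  intro hdvd
  have := Int.le_of_dvd (by linarith [hw.1]) hdvd
  linarith [hw.2]

theorem val_mem_Icc_of_ne_zero [NeZero p] {c : ZMod p} (hc : c ≠ 0) :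
    (c.val : ℤ) ∈ Set.Icc 1 ((p : ℤ) - 1) := by
  have := ZMod.val_lt c
  have := (ZMod.val_ne_zero c).mpr hc
  constructor <;> omega

theorem exists_isWZeroSubsum_of_sum_smul_eq_zero [NeZero p] {S : Multiset V}
    (L : List (ZMod p × V)) (hL : (L.map Prod.snd : Multiset V) ≤ S)
    (hne : ∃ q ∈ L, q.1 ≠ 0) (hsum : (L.map fun q => q.1 • q.2).sum = 0) :
    ∃ l, IsWZeroSubsum (Set.Icc 1 ((p : ℤ) - 1)) S l ∧ l.length ≤ L.length := by
  have hfilter : ∀ L : List (ZMod p × V),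
      ((L.filter fun q => q.1 ≠ 0).map fun q => q.1 • q.2).sum
        = (L.map fun q => q.1 • q.2).sum := by
    intro L
    induction L with
    | nil => rfl
    | cons q L ih => by_cases h : q.1 = 0 <;> simp_all
  refine ⟨(L.filter fun q => q.1 ≠ 0).map fun q => ((q.1.val : ℤ), q.2), ⟨?_, ?_, ?_, ?_⟩, ?_⟩
  · obtain ⟨q, hq, hq0⟩ := hne
    simpa [List.filter_eq_nil_iff] using ⟨q.1, ⟨q.2, hq⟩, hq0⟩
  · simp only [List.mem_map, List.mem_filter]
    rintro _ ⟨q, ⟨-, hq⟩, rfl⟩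
    exact val_mem_Icc_of_ne_zero (by simpa using hq)
  · refine le_trans (Multiset.coe_le.mpr ?_) hL
    simpa [Function.comp_def] using ((List.filter_sublist (l := L)).map Prod.snd).subperm
  · rw [← hsum, ← hfilter, List.map_map]
    congr 2
    ext q
    simp [← Int.cast_smul_eq_zsmul (ZMod p)]
  · simpa using List.length_filter_le _ L

variable [Fact p.Prime]

theorem zsmul_eq_zero_iff_of_mem_Icc {w : ℤ} (hw : w ∈ Set.Icc 1 ((p : ℤ) - 1)) {v : V} :
    w • v = 0 ↔ v = 0 := by
  rw [← Int.cast_smul_eq_zsmul (ZMod p), smul_eq_zero, or_iff_right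
    (intCast_zmod_ne_zero_of_mem_Icc hw)]

theorem mk_eq_mk_of_zsmul_add_zsmul_eq_zero {w₁ w₂ : ℤ} (hw₁ : w₁ ∈ Set.Icc 1 ((p : ℤ) - 1))
    (hw₂ : w₂ ∈ Set.Icc 1 ((p : ℤ) - 1)) {g h : V} (hg : g ≠ 0) (hh : h ≠ 0)
    (hgh : w₁ • g + w₂ • h = 0) :
    Projectivization.mk (ZMod p) g hg = Projectivization.mk (ZMod p) h hh := by
  have h₁ := intCast_zmod_ne_zero_of_mem_Icc hw₁
  have h₂ := intCast_zmod_ne_zero_of_mem_Icc hw₂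
  rw [← Int.cast_smul_eq_zsmul (ZMod p), ← Int.cast_smul_eq_zsmul (ZMod p)] at hgh
  refine (Projectivization.mk_eq_mk_iff _ _ _ hg hh).mpr
    ⟨Units.mk0 (-(w₂ : ZMod p) / w₁) (by simp [h₁, h₂]), ?_⟩
  rw [Units.smul_mk0, div_eq_inv_mul, mul_smul, neg_smul, ← eq_neg_of_add_eq_zero_left hgh,
    inv_smul_smul₀ h₁]

end ZModModule

section ProjectivePoints

variable {K V : Type*} [DivisionRing K] [AddCommGroup V] [Module K V]

theorem Projectivization.rep_injective :
    Function.Injective (Projectivization.rep : ℙ K V → V) := fun x y h => by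
  rw [← Projectivization.mk_rep x, ← Projectivization.mk_rep y, Projectivization.mk_eq_mk_iff]
  exact ⟨1, by rw [one_smul, h]⟩

theorem exists_cons_cons_le_smul_eq_of_card_lt [Finite (ℙ K V)]
    {S : Multiset V} (h0 : (0 : V) ∉ S) (hS : Nat.card (ℙ K V) < S.card) :
    ∃ g h, g ::ₘ h ::ₘ 0 ≤ S ∧ ∃ a : Kˣ, a • h = g := by
  classical
  by_cases hnd : S.Nodup
  · let φ : S.toFinset → ℙ K V := fun x =>
      Projectivization.mk K x.1 fun hx => h0 (hx ▸ Multiset.mem_toFinset.mp x.2)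
    have hφ : ¬ Function.Injective φ := fun hinj => by
      have := Nat.card_le_card_of_injective φ hinj
      rw [Nat.card_eq_fintype_card, Fintype.card_coe, Multiset.toFinset_card_of_nodup hnd] at this
      omega
    simp only [Function.Injective, not_forall] at hφ
    obtain ⟨⟨g, hg⟩, ⟨h, hh⟩, hgh, hne⟩ := hφ
    obtain ⟨a, ha⟩ := (Projectivization.mk_eq_mk_iff _ _ _ _ _).mp hgh
    refine ⟨g, h, (Multiset.le_iff_subset ?_).mpr ?_, a, ha⟩
    · simpa using fun e => hne (Subtype.ext e)
    · simp only [Multiset.mem_toFinset] at hg hh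
      simp [Multiset.subset_iff, hg, hh]
  · obtain ⟨g, t, rfl⟩ : ∃ g t, S = g ::ₘ g ::ₘ t := by
      simpa [Multiset.nodup_iff_ne_cons_cons] using hnd
    exact ⟨g, g, by simp, 1, one_smul _ _⟩

end ProjectivePoints

section ShortZeroSubsums

variable {p : ℕ} [Fact p.Prime] {V : Type*} [AddCommGroup V] [Module (ZMod p) V]

theorem exists_isWZeroSubsum_length_le_finrank_succ [FiniteDimensional (ZMod p) V]
    {S : Multiset V} (hS : Module.finrank (ZMod p) V + 1 ≤ S.card) :
    ∃ l, IsWZeroSubsum (Set.Icc 1 ((p : ℤ) - 1)) S l ∧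
      l.length ≤ Module.finrank (ZMod p) V + 1 := by
  set ts := S.toList.take (Module.finrank (ZMod p) V + 1)
  have hlen : ts.length = Module.finrank (ZMod p) V + 1 := by simpa [ts] using hS
  have hdep : ¬ LinearIndependent (ZMod p) ts.get := fun h => by
    have := h.fintype_card_le_finrank
    simp only [Fintype.card_fin] at this
    omega
  obtain ⟨c, hc, i, hi⟩ := Fintype.not_linearIndependent_iff.mp hdep
  have hle : ((List.ofFn fun i => (c i, ts.get i)).map Prod.snd : Multiset V) ≤ S := by
    rw [List.map_ofFn]
    change (List.ofFn ts.get : Multiset V) ≤ S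
    rw [List.ofFn_get, ← Multiset.coe_toList S]
    exact Multiset.coe_le.mpr (List.take_sublist _ _).subperm
  have hsum : ((List.ofFn fun i => (c i, ts.get i)).map fun q => q.1 • q.2).sum = 0 := by
    rwa [List.map_ofFn, List.sum_ofFn]
  obtain ⟨l, hl, hl_len⟩ := exists_isWZeroSubsum_of_sum_smul_eq_zero _ hle
    ⟨_, List.mem_ofFn.mpr ⟨i, rfl⟩, hi⟩ hsum
  exact ⟨l, hl, by simpa [hlen] using hl_len⟩

theorem exists_isWZeroSubsum_length_le_two [Finite (ℙ (ZMod p) V)] {S : Multiset V}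
    (hS : Nat.card (ℙ (ZMod p) V) < S.card) :
    ∃ l, IsWZeroSubsum (Set.Icc 1 ((p : ℤ) - 1)) S l ∧ l.length ≤ 2 := by
  by_cases h0 : (0 : V) ∈ S
  · obtain ⟨l, hl, hlen⟩ := exists_isWZeroSubsum_of_sum_smul_eq_zero [((1 : ZMod p), (0 : V))]
      (by simpa using h0) ⟨_, List.mem_singleton_self _, one_ne_zero⟩ (by simp)
    exact ⟨l, hl, hlen.trans (by simp)⟩
  · obtain ⟨_, h, hle, a, rfl⟩ := exists_cons_cons_le_smul_eq_of_card_lt h0 hS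
    exact exists_isWZeroSubsum_of_sum_smul_eq_zero [(1, a • h), (-(a : ZMod p), h)]
      hle ⟨_, List.mem_cons_self, one_ne_zero⟩ (by simp [Units.smul_def])

end ShortZeroSubsums

section LowerBound

variable {p : ℕ} [Fact p.Prime] {V : Type*} [AddCommGroup V] [Module (ZMod p) V]

/-- Weigh a term `3` if it is the representative of `x₀` and `2` otherwise. A zero-subsum of
length two consists of two parallel terms, which here can only be two copies of `x₀.rep`, so
every zero-subsum weighs at least `6`. -/
theorem not_hasDisjointWZeroSubsums_map_rep {s : Finset (ℙ (ZMod p) V)} {x₀ : ℙ (ZMod p) V}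
    (hx₀ : x₀ ∉ s) {j m : ℕ} (h : 2 * s.card + 3 * j < 6 * m) :
    ¬ HasDisjointWZeroSubsums (Set.Icc 1 ((p : ℤ) - 1))
      ((s.val + Multiset.replicate j x₀).map Projectivization.rep) m := by
  classical
  set P := s.val + Multiset.replicate j x₀
  let f : V → ℕ := fun v => if v = x₀.rep then 3 else 2
  have hf2 : ∀ v, 2 ≤ f v := fun v => by dsimp only [f]; split_ifs <;> omega
  have hsum : ((P.map Projectivization.rep).map f).sum = 2 * s.card + 3 * j := by
    have hs : ∀ y ∈ s, f y.rep = 2 := fun y hy =>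
      if_neg fun e : y.rep = x₀.rep => hx₀ (Projectivization.rep_injective e ▸ hy)
    simp only [P, Multiset.map_add, Multiset.map_map, Multiset.map_replicate, Multiset.sum_add,
      Multiset.sum_replicate, Function.comp_apply]
    rw [← Finset.sum_eq_multiset_sum, Finset.sum_congr rfl hs]
    simp [f, mul_comm]
  have hf : ∀ l, IsWZeroSubsum (Set.Icc 1 ((p : ℤ) - 1)) (P.map Projectivization.rep) l →
      6 ≤ (l.map fun q => f q.2).sum := by
    rintro l ⟨hne, hw, hle, hl0⟩
    have hmem : ∀ q ∈ l, ∃ x ∈ P, x.rep = q.2 := fun q hq =>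
      Multiset.mem_map.mp (Multiset.mem_of_le hle (by simpa using ⟨q.1, hq⟩))
    rcases l with _ | ⟨⟨w₁, g⟩, _ | ⟨⟨w₂, h⟩, _ | ⟨q, l⟩⟩⟩
    · exact absurd rfl hne
    · obtain ⟨x, -, hx⟩ := hmem _ List.mem_cons_self
      have hg : g = 0 :=
        (zsmul_eq_zero_iff_of_mem_Icc (hw _ List.mem_cons_self)).mp (by simpa using hl0)
      exact absurd (hx.trans hg) x.rep_nonzero
    · obtain ⟨x, -, rfl⟩ := hmem _ List.mem_cons_self
      obtain ⟨y, -, rfl⟩ := hmem (w₂, h) (by simp)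
      obtain rfl : x = y := by
        simpa only [Projectivization.mk_rep] using mk_eq_mk_of_zsmul_add_zsmul_eq_zero
          (hw _ List.mem_cons_self) (hw (w₂, y.rep) (by simp)) x.rep_nonzero y.rep_nonzero
          (by simpa using hl0)
      obtain rfl : x = x₀ := by
        by_contra hne
        have h2 := Multiset.count_le_of_le x.rep hle
        rw [Multiset.count_map_eq_count' _ _ Projectivization.rep_injective] at h2
        simp only [P, Multiset.count_add, Multiset.count_replicate, if_neg (Ne.symm hne),
          Multiset.count_eq_of_nodup s.nodup] at h2
        split_ifs at h2 <;> simp at h2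
      simp [f]
    · have := hf2 g; have := hf2 h; have := hf2 q.2
      simp only [List.map_cons, List.sum_cons]
      omega
  exact fun hd => by have := hd.mul_le_sum_map f hf; omega

end LowerBound

section DavenportConstant

variable {p : ℕ} [Fact p.Prime] {V : Type*} [AddCommGroup V] [Module (ZMod p) V]

theorem hasDisjointWZeroSubsums_of_finrank_succ_mul_le [FiniteDimensional (ZMod p) V] {m : ℕ}
    {S : Multiset V} (hS : (Module.finrank (ZMod p) V + 1) * m ≤ S.card) :
    HasDisjointWZeroSubsums (Set.Icc 1 ((p : ℤ) - 1)) S m := by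
  simpa using hasDisjointWZeroSubsums_add_of_short (N := 0) (m₀ := 0)
    (fun _ hS => exists_isWZeroSubsum_length_le_finrank_succ hS)
    (fun S _ => hasDisjointWZeroSubsums_zero S) le_add_self m S (by simpa using hS)

theorem hasDisjointWZeroSubsums_of_finrank_eq_two (hV : Module.finrank (ZMod p) V = 2)
    {m : ℕ} {S : Multiset V} (hS : 2 * m + min m ((p + 2) / 3) ≤ S.card) :
    HasDisjointWZeroSubsums (Set.Icc 1 ((p : ℤ) - 1)) S m := by
  have : FiniteDimensional (ZMod p) V := .of_finrank_pos (by omega)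
  have : Finite V := Module.finite_of_finite (ZMod p)
  have hcard : Nat.card (ℙ (ZMod p) V) = p + 1 := by
    rw [Projectivization.card_of_finrank_two _ _ hV, Nat.card_zmod]
  have hthree : ∀ {m} {S : Multiset V}, 3 * m ≤ S.card →
      HasDisjointWZeroSubsums (Set.Icc 1 ((p : ℤ) - 1)) S m := fun hS =>
    hasDisjointWZeroSubsums_of_finrank_succ_mul_le (by rwa [hV])
  rcases le_or_gt m ((p + 2) / 3) with hm | hm
  · exact hthree (by omega)
  · obtain ⟨k, rfl⟩ := Nat.exists_eq_add_of_lt hm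
    exact hasDisjointWZeroSubsums_add_of_short (n := p + 2) (d := 2)
      (fun _ hS => exists_isWZeroSubsum_length_le_two (by omega)) (fun _ => hthree)
      (by omega) (k + 1) S (by omega)

theorem exists_not_hasDisjointWZeroSubsums_of_finrank_eq_two
    (hV : Module.finrank (ZMod p) V = 2) {m : ℕ} (hm : 1 ≤ m) :
    ∃ S₀ : Multiset V, ¬ HasDisjointWZeroSubsums (Set.Icc 1 ((p : ℤ) - 1)) S₀ m ∧
      S₀.card + 1 = 2 * m + min m ((p + 2) / 3) := by
  classical
  have : FiniteDimensional (ZMod p) V := .of_finrank_pos (by omega)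
  have : Finite V := Module.finite_of_finite (ZMod p)
  have : Nontrivial V := Module.nontrivial_of_finrank_pos (R := ZMod p) (by omega)
  have := Fintype.ofFinite (ℙ (ZMod p) V)
  have hp := (Fact.out : p.Prime).two_le
  have hcard : Fintype.card (ℙ (ZMod p) V) = p + 1 := by
    rw [← Nat.card_eq_fintype_card, Projectivization.card_of_finrank_two _ _ hV, Nat.card_zmod]
  set c := min m ((p + 2) / 3)
  have hc : 1 ≤ c ∧ 3 * c ≤ p + 2 := by omega
  let x₀ : ℙ (ZMod p) V := Classical.arbitrary _
  obtain ⟨s, hs, hs_card⟩ := Finset.exists_subset_card_eq (s := Finset.univ.erase x₀)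
    (n := 3 * c - 2) (by rw [Finset.card_erase_of_mem (Finset.mem_univ _), Finset.card_univ]; omega)
  refine ⟨_, not_hasDisjointWZeroSubsums_map_rep (x₀ := x₀) (j := 2 * (m - c) + 1)
    (fun h => by simpa using hs h) ?_, ?_⟩
  · omega
  · simp [hs_card]
    omega

theorem DW_eq_of_finrank_eq_one (hV : Module.finrank (ZMod p) V = 1) {m : ℕ} (hm : 1 ≤ m) :
    DW (Set.Icc 1 ((p : ℤ) - 1)) V m = 2 * m := by
  have : FiniteDimensional (ZMod p) V := .of_finrank_pos (by omega)
  have : Nontrivial V := Module.nontrivial_of_finrank_pos (R := ZMod p) (by omega)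
  refine DW_eq_of_forall_of_not
    (fun S hS => hasDisjointWZeroSubsums_of_finrank_succ_mul_le (by rwa [hV]))
    (not_hasDisjointWZeroSubsums_map_rep (s := ∅) (x₀ := Classical.arbitrary _)
      (j := 2 * m - 1) (Finset.notMem_empty _) (by simp; omega)) (by simp; omega)

theorem DW_eq_of_finrank_eq_two (hV : Module.finrank (ZMod p) V = 2) {m : ℕ} (hm : 1 ≤ m) :
    DW (Set.Icc 1 ((p : ℤ) - 1)) V m = 2 * m + min m ((p + 2) / 3) := by
  obtain ⟨S₀, hS₀, hcard⟩ := exists_not_hasDisjointWZeroSubsums_of_finrank_eq_two hV hm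
  exact DW_eq_of_forall_of_not (fun _ hS => hasDisjointWZeroSubsums_of_finrank_eq_two hV hS)
    hS₀ hcard

end DavenportConstant

/-- `D_{A,m}(C_p) = 2m`; and `D_{A,m}(C_p²) = 3m` for `m ≤ ⌈p/3⌉`
while `D_{A,m}(C_p²) = 2m + ⌈p/3⌉` for `m > ⌈p/3⌉` (here `⌈p/3⌉ = (p+2)/3`). -/
theorem stmt17 (p : ℕ) (hp : p.Prime) :
    (∀ m : ℕ, 1 ≤ m → DW (Set.Icc 1 ((p : ℤ) - 1)) (ZMod p) m = 2 * m) ∧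
    (∀ m : ℕ, 1 ≤ m → m ≤ (p + 2) / 3 →
      DW (Set.Icc 1 ((p : ℤ) - 1)) (Fin 2 → ZMod p) m = 3 * m) ∧
    (∀ m : ℕ, (p + 2) / 3 < m →
      DW (Set.Icc 1 ((p : ℤ) - 1)) (Fin 2 → ZMod p) m = 2 * m + (p + 2) / 3) := by
  have := Fact.mk hp
  have hV := Module.finrank_fin_fun (ZMod p) (n := 2)
  refine ⟨fun m hm => DW_eq_of_finrank_eq_one (Module.finrank_self _) hm, fun m hm hmc => ?_,
    fun m hmc => ?_⟩
  · rw [DW_eq_of_finrank_eq_two hV hm, min_eq_left hmc]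
    ring
  · rw [DW_eq_of_finrank_eq_two hV (by omega), min_eq_right hmc.le]
end
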